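/- arXiv:2304.04769 — 9 statements merged into one kernel-verified Lean document; each statement's English description precedes it below -/
import Mathlib

section
/- If π is a 231-avoiding permutation of length n, then the set of positions of the right-to-left maxima of π equals the first inverse descent run I₁ of π (the inverse descent run containing the largest letter n), and the set of values at these positions is exactly {π_n, π_n+1, ..., n}. -/
open scoped Classical

namespace ThesisStmt
noncomputable section

variable {n : ℕ}

/-- π avoids the classical pattern 231: no i<j<k with π k < π i < π j. -/
def Avoids231 (π : Equiv.Perm (Fin n)) : Prop :=
  ¬ ∃ i j k : Fin n, i < j ∧ j < k ∧ π k < π i ∧ π i < π j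

/-- π avoids 312: no i<j<k with π j < π k < π i. -/
def Avoids312 (π : Equiv.Perm (Fin n)) : Prop :=
  ¬ ∃ i j k : Fin n, i < j ∧ j < k ∧ π j < π k ∧ π k < π i

/-- π avoids 321: no i<j<k with π k < π j < π i. -/
def Avoids321 (π : Equiv.Perm (Fin n)) : Prop :=
  ¬ ∃ i j k : Fin n, i < j ∧ j < k ∧ π k < π j ∧ π j < π i

/-- A nonempty set of positions whose values, read in increasing position order,
form consecutive integers decreasing by 1 (values strictly decrease along positions
and the value set is an integer interval). -/
def IsDecSeq (π : Equiv.Perm (Fin n)) (I : Finset (Fin n)) : Prop :=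
  I.Nonempty ∧ (∀ i ∈ I, ∀ j ∈ I, i < j → π j < π i) ∧
    ∀ v : Fin n, (∃ a ∈ I, π a ≤ v) → (∃ b ∈ I, v ≤ π b) → ∃ c ∈ I, π c = v

/-- An inverse descent run: a maximal `IsDecSeq`. -/
def IsIDR (π : Equiv.Perm (Fin n)) (I : Finset (Fin n)) : Prop :=
  IsDecSeq π I ∧ ∀ J : Finset (Fin n), IsDecSeq π J → I ⊆ J → J = I

/-- `I 0, I 1, ..., I (k-1)` is the family of inverse descent runs of π,
partitioning the positions, ordered by decreasing maximum value. -/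
def IDRFamily (π : Equiv.Perm (Fin n)) {k : ℕ} (I : Fin k → Finset (Fin n)) : Prop :=
  (∀ j, IsIDR π (I j)) ∧ (∀ x : Fin n, ∃! j, x ∈ I j) ∧
    ∀ u v : Fin k, u < v → ∃ a ∈ I u, ∀ b ∈ I v, π b < π a

/-- position i is a left-to-right maximum. -/
def IsLmax (π : Equiv.Perm (Fin n)) (i : Fin n) : Prop := ∀ j, j < i → π j < π i

/-- position i is a right-to-left maximum. -/
def IsRmax (π : Equiv.Perm (Fin n)) (i : Fin n) : Prop := ∀ j, i < j → π j < π i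

/-- position i is a right-to-left minimum. -/
def IsRmin (π : Equiv.Perm (Fin n)) (i : Fin n) : Prop := ∀ j, i < j → π i < π j

def LmaxSet (π : Equiv.Perm (Fin n)) : Finset (Fin n) := Finset.univ.filter (IsLmax π)

def rmaxCount (π : Equiv.Perm (Fin n)) : ℕ := (Finset.univ.filter (IsRmax π)).card

def rminCount (π : Equiv.Perm (Fin n)) : ℕ := (Finset.univ.filter (IsRmin π)).card

/-- number of inversions (i, j) with first coordinate i. -/
def invAt (π : Equiv.Perm (Fin n)) (i : Fin n) : ℕ :=
  (Finset.univ.filter (fun j : Fin n => i < j ∧ π j < π i)).card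

/-- total number of inversions. -/
def inv (π : Equiv.Perm (Fin n)) : ℕ :=
  (Finset.univ.filter (fun p : Fin n × Fin n => p.1 < p.2 ∧ π p.2 < π p.1)).card

def IsAscent (π : Equiv.Perm (Fin n)) (i : Fin n) : Prop :=
  ∃ h : (i : ℕ) + 1 < n, π i < π ⟨(i : ℕ) + 1, h⟩

def IsDescent (π : Equiv.Perm (Fin n)) (i : Fin n) : Prop :=
  ∃ h : (i : ℕ) + 1 < n, π ⟨(i : ℕ) + 1, h⟩ < π i

/-- number of descents, which is also the number of occurrences of [21]. -/
def des (π : Equiv.Perm (Fin n)) : ℕ := (Finset.univ.filter (IsDescent π)).card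

/-- occurrences of the vincular pattern 2-[13]: (x, y, y+1), x < y, π y < π x < π (y+1). -/
def occ2_13 (π : Equiv.Perm (Fin n)) : ℕ :=
  (Finset.univ.filter (fun p : Fin n × Fin n =>
    ∃ h : (p.2 : ℕ) + 1 < n, p.1 < p.2 ∧
      π p.2 < π p.1 ∧ π p.1 < π ⟨(p.2 : ℕ) + 1, h⟩)).card

/-- occurrences of [23]-1: (x, x+1, y), x+1 < y, π y < π x < π (x+1). -/
def occ23_1 (π : Equiv.Perm (Fin n)) : ℕ :=
  (Finset.univ.filter (fun p : Fin n × Fin n =>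
    ∃ h : (p.1 : ℕ) + 1 < n, (⟨(p.1 : ℕ) + 1, h⟩ : Fin n) < p.2 ∧
      π p.2 < π p.1 ∧ π p.1 < π ⟨(p.1 : ℕ) + 1, h⟩)).card

/-- occurrences of [13]-2: (x, x+1, y), x+1 < y, π x < π y < π (x+1). -/
def occ13_2 (π : Equiv.Perm (Fin n)) : ℕ :=
  (Finset.univ.filter (fun p : Fin n × Fin n =>
    ∃ h : (p.1 : ℕ) + 1 < n, (⟨(p.1 : ℕ) + 1, h⟩ : Fin n) < p.2 ∧
      π p.1 < π p.2 ∧ π p.2 < π ⟨(p.1 : ℕ) + 1, h⟩)).card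

/-- occurrences of [21]-3: (x, x+1, y), x+1 < y, π (x+1) < π x < π y. -/
def occ21_3 (π : Equiv.Perm (Fin n)) : ℕ :=
  (Finset.univ.filter (fun p : Fin n × Fin n =>
    ∃ h : (p.1 : ℕ) + 1 < n, (⟨(p.1 : ℕ) + 1, h⟩ : Fin n) < p.2 ∧
      π ⟨(p.1 : ℕ) + 1, h⟩ < π p.1 ∧ π p.1 < π p.2)).card

/-- occurrences of [32]-1: (x, x+1, y), x+1 < y, π y < π (x+1) < π x. -/
def occ32_1 (π : Equiv.Perm (Fin n)) : ℕ :=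
  (Finset.univ.filter (fun p : Fin n × Fin n =>
    ∃ h : (p.1 : ℕ) + 1 < n, (⟨(p.1 : ℕ) + 1, h⟩ : Fin n) < p.2 ∧
      π p.2 < π ⟨(p.1 : ℕ) + 1, h⟩ ∧ π ⟨(p.1 : ℕ) + 1, h⟩ < π p.1)).card

/-- occurrences of [31]-2: (x, x+1, y), x+1 < y, π (x+1) < π y < π x. -/
def occ31_2 (π : Equiv.Perm (Fin n)) : ℕ :=
  (Finset.univ.filter (fun p : Fin n × Fin n =>
    ∃ h : (p.1 : ℕ) + 1 < n, (⟨(p.1 : ℕ) + 1, h⟩ : Fin n) < p.2 ∧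
      π ⟨(p.1 : ℕ) + 1, h⟩ < π p.2 ∧ π p.2 < π p.1)).card

/-- occurrences of 3-[21]: (y, x, x+1), y < x, π (x+1) < π x < π y. -/
def occ3_21 (π : Equiv.Perm (Fin n)) : ℕ :=
  (Finset.univ.filter (fun p : Fin n × Fin n =>
    ∃ h : (p.2 : ℕ) + 1 < n, p.1 < p.2 ∧
      π ⟨(p.2 : ℕ) + 1, h⟩ < π p.2 ∧ π p.2 < π p.1)).card

/-- bast = [13]2 + [21]3 + [32]1 + [21]. -/
def bast (π : Equiv.Perm (Fin n)) : ℕ := occ13_2 π + occ21_3 π + occ32_1 π + des π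

/-- foze = [21]3 + 3[21] + [13]2 + [21]. -/
def foze (π : Equiv.Perm (Fin n)) : ℕ := occ21_3 π + occ3_21 π + occ13_2 π + des π

/-- foze'' = [23]1 + [31]2 + [31]2 + [21]. -/
def fozePP (π : Equiv.Perm (Fin n)) : ℕ := occ23_1 π + occ31_2 π + occ31_2 π + des π

/-- For a 231-avoiding permutation, the set of right-to-left maxima
positions equals the first inverse descent run (the one containing the maximum
value n), and its value set is {π_n, ..., n}. -/
theorem stmt0 {n : ℕ} (π : Equiv.Perm (Fin (n + 1))) (h : Avoids231 π)
    (I : Finset (Fin (n + 1))) (hI : IsIDR π I) (htop : ∃ a ∈ I, π a = Fin.last n) :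
    Finset.univ.filter (IsRmax π) = I ∧
      I.image π = Finset.Icc (π (Fin.last n)) (Fin.last n) := by
  set R := Finset.univ.filter (IsRmax π) with hRdef
  -- key: every value ≥ π(last) sits at a right-to-left maximum position
  have key : ∀ v : Fin (n + 1), π (Fin.last n) ≤ v → IsRmax π (π.symm v) := by
    intro v hv j hj
    by_contra hle
    push_neg at hle
    rw [Equiv.apply_symm_apply] at hle
    rcases eq_or_lt_of_le hv with heq | hlt
    · have : π.symm v = Fin.last n := by rw [← heq, Equiv.symm_apply_apply]
      rw [this] at hj
      exact absurd hj (not_lt.mpr (Fin.le_last j))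
    · have hne : π j ≠ v := by
        intro hpj
        have : j = π.symm v := by rw [← hpj, Equiv.symm_apply_apply]
        rw [this] at hj; exact lt_irrefl _ hj
      have hvj : v < π j := lt_of_le_of_ne hle (Ne.symm hne)
      have hjne : j ≠ Fin.last n := by
        intro hlast
        rw [hlast] at hvj
        exact absurd (hlt.trans hvj) (lt_irrefl _)
      have hjlt : j < Fin.last n := lt_of_le_of_ne (Fin.le_last j) hjne
      have hpv : π (π.symm v) = v := Equiv.apply_symm_apply π v
      exact h ⟨π.symm v, j, Fin.last n, hj, hjlt, by rw [hpv]; exact hlt, by rw [hpv]; exact hvj⟩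
  have memR : ∀ a : Fin (n + 1), a ∈ R ↔ π (Fin.last n) ≤ π a := by
    intro a
    rw [hRdef, Finset.mem_filter]
    constructor
    · rintro ⟨-, ha⟩
      rcases eq_or_lt_of_le (Fin.le_last a) with heq | hlt
      · rw [heq]
      · exact le_of_lt (ha _ hlt)
    · intro hle
      refine ⟨Finset.mem_univ _, ?_⟩
      have := key (π a) hle
      rwa [Equiv.symm_apply_apply] at this
  have hlastR : Fin.last n ∈ R := by
    rw [memR]
  have hRdec : IsDecSeq π R := by
    refine ⟨⟨Fin.last n, hlastR⟩, ?_, ?_⟩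
    · intro i hi j hj hij
      rw [hRdef, Finset.mem_filter] at hi
      exact hi.2 j hij
    · rintro v ⟨a, ha, hav⟩ -
      refine ⟨π.symm v, ?_, Equiv.apply_symm_apply π v⟩
      rw [hRdef, Finset.mem_filter]
      exact ⟨Finset.mem_univ _, key v (le_trans ((memR a).mp ha) hav)⟩
  obtain ⟨m, hmI, hmv⟩ := htop
  obtain ⟨⟨hIne, hIdec, hIint⟩, hImax⟩ := hI
  have hIR : I ⊆ R := by
    intro a ha
    rw [memR]
    have haRmax : IsRmax π a := by
      intro j hj
      by_contra hle
      push_neg at hle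
      have hne : π a ≠ π j := fun hpj => (lt_irrefl j) (by
        have := π.injective hpj; rw [this] at hj; exact hj)
      have hlt : π a < π j := lt_of_le_of_ne hle hne
      obtain ⟨c, hcI, hcv⟩ := hIint (π j) ⟨a, ha, le_of_lt hlt⟩
        ⟨m, hmI, by rw [hmv]; exact Fin.le_last _⟩
      have : c = j := π.injective hcv
      rw [this] at hcI
      exact absurd (hIdec a ha j hcI hj) (not_lt.mpr (le_of_lt hlt))
    rcases eq_or_lt_of_le (Fin.le_last a) with heq | hlt
    · rw [heq]
    · exact le_of_lt (haRmax _ hlt)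
  have hRI : R = I := hImax R hRdec hIR
  refine ⟨hRI, ?_⟩
  rw [← hRI]
  ext v
  simp only [Finset.mem_image, Finset.mem_Icc]
  constructor
  · rintro ⟨a, ha, rfl⟩
    exact ⟨(memR a).mp ha, Fin.le_last _⟩
  · rintro ⟨h1, -⟩
    refine ⟨π.symm v, ?_, Equiv.apply_symm_apply π v⟩
    rw [memR, Equiv.apply_symm_apply]
    exact h1

end
end ThesisStmt
end

section
/- Let π be a 231-avoiding permutation of length n with inverse descent runs I₁, ..., I_k ordered by decreasing maximum value. Then a position i < n is an ascent of π (i.e., π_i < π_{i+1}) if and only if there exists j > 1 such that i = max(I_j). Consequently, the number of ascents of π equals k - 1. -/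
open scoped Classical

namespace ThesisStmt
noncomputable section

variable {n : ℕ}

lemma decseq_pair {π : Equiv.Perm (Fin n)} {I : Finset (Fin n)} (hd : IsDecSeq π I)
    {a b : Fin n} (ha : a ∈ I) (hb : b ∈ I) (hab : a < b) : π b < π a :=
  hd.2.1 a ha b hb hab

lemma le_apply_max' {π : Equiv.Perm (Fin n)} {I : Finset (Fin n)} (hd : IsDecSeq π I)
    (hne : I.Nonempty) {c : Fin n} (hc : c ∈ I) : π (I.max' hne) ≤ π c := by
  rcases eq_or_lt_of_le (I.le_max' c hc) with h | h
  · rw [h]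
  · exact le_of_lt (hd.2.1 c hc _ (I.max'_mem hne) h)

lemma apply_min'_le {π : Equiv.Perm (Fin n)} {I : Finset (Fin n)} (hd : IsDecSeq π I)
    (hne : I.Nonempty) {c : Fin n} (hc : c ∈ I) : π c ≤ π (I.min' hne) := by
  rcases eq_or_lt_of_le (I.min'_le c hc) with h | h
  · rw [← h]
  · exact le_of_lt (hd.2.1 _ (I.min'_mem hne) c hc h)

/-- If `π r` is one below the minimal value of a maximal decreasing run, then `r`
lies strictly before the last position of the run. -/
lemma lt_max'_of_pred {π : Equiv.Perm (Fin n)} {I : Finset (Fin n)} (hI : IsIDR π I)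
    (hne : I.Nonempty) {r : Fin n}
    (hr : (π r : ℕ) + 1 = (π (I.max' hne) : ℕ)) : r < I.max' hne := by
  have hri : π r < π (I.max' hne) := by rw [Fin.lt_def]; omega
  by_contra hcon
  have hir : I.max' hne < r :=
    lt_of_le_of_ne (not_lt.mp hcon) (fun hh => absurd (hh ▸ hri) (lt_irrefl _))
  have hJ : IsDecSeq π (insert r I) := by
    refine ⟨⟨r, Finset.mem_insert_self r I⟩, ?_, ?_⟩
    · intro a ha b hb hab
      rcases Finset.mem_insert.mp ha with rfl | haI
      · rcases Finset.mem_insert.mp hb with rfl | hbI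
        · exact absurd hab (lt_irrefl _)
        · exact absurd hab (not_lt.mpr ((I.le_max' b hbI).trans hir.le))
      · rcases Finset.mem_insert.mp hb with rfl | hbI
        · exact lt_of_lt_of_le hri (le_apply_max' hI.1 hne haI)
        · exact hI.1.2.1 a haI b hbI hab
    · rintro v ⟨a, ha, hav⟩ ⟨b, hb, hvb⟩
      by_cases hvi : π (I.max' hne) ≤ v
      · have hbI : b ∈ I := by
          rcases Finset.mem_insert.mp hb with rfl | hh
          · exact absurd (lt_of_le_of_lt (hvi.trans hvb) hri) (lt_irrefl _)
          · exact hh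
        obtain ⟨c, hc, hcv⟩ := hI.1.2.2 v ⟨_, I.max'_mem hne, hvi⟩ ⟨b, hbI, hvb⟩
        exact ⟨c, Finset.mem_insert_of_mem hc, hcv⟩
      · push_neg at hvi
        have haR : a = r := by
          rcases Finset.mem_insert.mp ha with rfl | hh
          · rfl
          · exact absurd (lt_of_le_of_lt hav hvi) (not_lt.mpr (le_apply_max' hI.1 hne hh))
        subst haR
        have hva : v = π a := by
          have h1 : (v : ℕ) < (π (I.max' hne) : ℕ) := hvi
          have h2 : (π a : ℕ) ≤ (v : ℕ) := hav
          have : (v : ℕ) = (π a : ℕ) := by omega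
          exact Fin.ext this
        exact ⟨a, Finset.mem_insert_self _ _, hva.symm⟩
  have hEq := hI.2 _ hJ (Finset.subset_insert r I)
  have hrI : r ∈ I := hEq ▸ Finset.mem_insert_self r I
  exact absurd (I.le_max' r hrI) (not_le.mpr hir)

/-- If `π q` is one above the maximal value of a maximal decreasing run, then `q`
lies strictly after the first position of the run. -/
lemma min'_lt_of_succ {π : Equiv.Perm (Fin n)} {I : Finset (Fin n)} (hI : IsIDR π I)
    (hne : I.Nonempty) {q : Fin n}
    (hq : (π q : ℕ) = (π (I.min' hne) : ℕ) + 1) : I.min' hne < q := by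
  have hmq : π (I.min' hne) < π q := by rw [Fin.lt_def]; omega
  by_contra hcon
  have hqm : q < I.min' hne :=
    lt_of_le_of_ne (not_lt.mp hcon) (fun hh => hmq.ne' (congrArg π hh))
  have hJ : IsDecSeq π (insert q I) := by
    refine ⟨⟨q, Finset.mem_insert_self q I⟩, ?_, ?_⟩
    · intro a ha b hb hab
      rcases Finset.mem_insert.mp ha with rfl | haI
      · rcases Finset.mem_insert.mp hb with rfl | hbI
        · exact absurd hab (lt_irrefl _)
        · exact lt_of_le_of_lt (apply_min'_le hI.1 hne hbI) hmq
      · rcases Finset.mem_insert.mp hb with rfl | hbI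
        · exact absurd hab (not_lt.mpr (hqm.le.trans (I.min'_le a haI)))
        · exact hI.1.2.1 a haI b hbI hab
    · rintro v ⟨a, ha, hav⟩ ⟨b, hb, hvb⟩
      by_cases hvm : v ≤ π (I.min' hne)
      · have haI : a ∈ I := by
          rcases Finset.mem_insert.mp ha with rfl | hh
          · exact absurd (lt_of_le_of_lt (hav.trans hvm) hmq) (lt_irrefl _)
          · exact hh
        obtain ⟨c, hc, hcv⟩ := hI.1.2.2 v ⟨a, haI, hav⟩ ⟨_, I.min'_mem hne, hvm⟩
        exact ⟨c, Finset.mem_insert_of_mem hc, hcv⟩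
      · push_neg at hvm
        have hbQ : b = q := by
          rcases Finset.mem_insert.mp hb with rfl | hh
          · rfl
          · exact absurd (lt_of_le_of_lt (hvb.trans (apply_min'_le hI.1 hne hh)) hvm)
              (lt_irrefl _)
        subst hbQ
        have hvb' : v = π b := by
          have h1 : (π (I.min' hne) : ℕ) < (v : ℕ) := hvm
          have h2 : (v : ℕ) ≤ (π b : ℕ) := hvb
          exact Fin.ext (by omega)
        exact ⟨b, Finset.mem_insert_self _ _, hvb'.symm⟩
  have hEq := hI.2 _ hJ (Finset.subset_insert q I)
  have hqI : q ∈ I := hEq ▸ Finset.mem_insert_self q I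
  exact absurd (I.min'_le q hqI) (not_le.mpr hqm)

/-- In a 231-avoiding permutation, the position right after the last position of a
maximal decreasing run carries a larger value. -/
lemma ascent_of_isMax {π : Equiv.Perm (Fin n)} (h231 : Avoids231 π) {I : Finset (Fin n)}
    (hI : IsIDR π I) (hne : I.Nonempty)
    (hlt : ((I.max' hne : ℕ)) + 1 < n) :
    π (I.max' hne) < π ⟨(I.max' hne : ℕ) + 1, hlt⟩ := by
  set i := I.max' hne with hidef
  set s : Fin n := ⟨(i : ℕ) + 1, hlt⟩ with hs
  have his : i < s := by rw [Fin.lt_def]; simp [hs]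
  by_contra hcon
  push_neg at hcon
  have hne2 : π s ≠ π i := fun hh => his.ne (π.injective hh.symm)
  have hsi : π s < π i := lt_of_le_of_ne hcon hne2
  have hsi' : (π s : ℕ) < (π i : ℕ) := hsi
  by_cases hcase : (π s : ℕ) + 1 = (π i : ℕ)
  · exact absurd (lt_max'_of_pred hI hne hcase) (not_lt.mpr his.le)
  · have h1 : (π s : ℕ) + 1 < (π i : ℕ) := by omega
    have hrn : (π i : ℕ) - 1 < n := by have := (π i).isLt; omega
    set r := π.symm ⟨(π i : ℕ) - 1, hrn⟩ with hrdef
    have hrv : (π r : ℕ) = (π i : ℕ) - 1 := by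
      rw [hrdef, Equiv.apply_symm_apply]
    have hr1 : (π r : ℕ) + 1 = (π i : ℕ) := by omega
    have hri : r < i := lt_max'_of_pred hI hne hr1
    exact h231 ⟨r, i, s, hri, his, by rw [Fin.lt_def]; omega, by rw [Fin.lt_def]; omega⟩

/-- For a 231-avoiding permutation, the last position of a non-leading run is not
the last position of the permutation. -/
lemma maxrun_add_one_lt {π : Equiv.Perm (Fin n)} (h231 : Avoids231 π) {k : ℕ}
    {I : Fin k → Finset (Fin n)} (hI : IDRFamily π I) {j : Fin k} (hj : 0 < (j : ℕ))
    (hne : (I j).Nonempty) : ((I j).max' hne : ℕ) + 1 < n := by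
  have hk : 0 < k := lt_of_le_of_lt (Nat.zero_le _) j.isLt
  set i := (I j).max' hne with hidef
  set m := (I j).min' hne with hmdef
  obtain ⟨a, ha0, hab⟩ := hI.2.2 ⟨0, hk⟩ j (by rw [Fin.lt_def]; exact hj)
  have hma : π m < π a := hab m ((I j).min'_mem hne)
  have hqn : (π m : ℕ) + 1 < n := by
    have h1 : (π m : ℕ) < (π a : ℕ) := hma
    have := (π a).isLt; omega
  set q := π.symm ⟨(π m : ℕ) + 1, hqn⟩ with hqdef
  have hqv : (π q : ℕ) = (π m : ℕ) + 1 := by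
    rw [hqdef, Equiv.apply_symm_apply]
  have hmq : m < q := min'_lt_of_succ (hI.1 j) hne hqv
  by_contra hcon
  have htop : ∀ x : Fin n, x ≤ i := by
    intro x; rw [Fin.le_def]; have := x.isLt; omega
  by_cases hmi : m = i
  · exact absurd (htop q) (not_le.mpr (hmi ▸ hmq))
  · have hmi' : m < i :=
      lt_of_le_of_ne ((I j).min'_le i ((I j).max'_mem hne)) hmi
    have him : π i < π m := decseq_pair (hI.1 j).1 ((I j).min'_mem hne)
      ((I j).max'_mem hne) hmi'
    have hqi : q ≠ i := by
      intro hh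
      rw [← hh, Fin.lt_def] at him; omega
    have hq_lt : q < i := lt_of_le_of_ne (htop q) hqi
    exact h231 ⟨m, q, i, hmq, hq_lt, him, by rw [Fin.lt_def]; omega⟩

/-- In a 231-avoiding permutation, an ascent position is the last position of its run. -/
lemma max_of_ascent {π : Equiv.Perm (Fin n)} (h231 : Avoids231 π) {I : Finset (Fin n)}
    (hd : IsDecSeq π I) {i : Fin n} (hi : i ∈ I) (ha : IsAscent π i) :
    ∀ b ∈ I, b ≤ i := by
  obtain ⟨h1, h2⟩ := ha
  intro b hb
  by_contra hcon
  push_neg at hcon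
  have hbi : π b < π i := hd.2.1 i hi b hb hcon
  have hsb : (⟨(i : ℕ) + 1, h1⟩ : Fin n) ≤ b := by
    rw [Fin.le_def]; rw [Fin.lt_def] at hcon; exact hcon
  rcases eq_or_lt_of_le hsb with heq | hlt
  · rw [heq] at h2; exact absurd h2 (not_lt.mpr hbi.le)
  · exact h231 ⟨i, ⟨(i : ℕ) + 1, h1⟩, b, by simp [Fin.lt_def], hlt, hbi, h2⟩

/-- The position of the top value lies in the first run. -/
lemma top_mem_zero {π : Equiv.Perm (Fin n)} {k : ℕ} {I : Fin k → Finset (Fin n)}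
    (hI : IDRFamily π I) (hn : 0 < n) {u : Fin k}
    (hu : π.symm ⟨n - 1, by omega⟩ ∈ I u) : (u : ℕ) = 0 := by
  by_contra hne0
  have hk : 0 < k := lt_of_le_of_lt (Nat.zero_le _) u.isLt
  obtain ⟨a, ha0, hab⟩ := hI.2.2 ⟨0, hk⟩ u (by rw [Fin.lt_def]; exact Nat.pos_of_ne_zero hne0)
  have htop := hab _ hu
  rw [Equiv.apply_symm_apply, Fin.lt_def] at htop
  have := (π a).isLt
  simp at htop
  omega

/-- for a 231-avoiding π with ordered inverse descent runs I₁,...,I_k,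
a position i is an ascent iff i = max(I_j) for some j > 1; hence π has k-1 ascents. -/
theorem stmt1 {n k : ℕ} (π : Equiv.Perm (Fin n)) (h : Avoids231 π)
    (I : Fin k → Finset (Fin n)) (hI : IDRFamily π I) :
    (∀ i : Fin n, IsAscent π i ↔
      ∃ j : Fin k, 0 < (j : ℕ) ∧ ∃ hne : (I j).Nonempty, i = (I j).max' hne) ∧
    (Finset.univ.filter (IsAscent π)).card = k - 1 := by
  have part1 : ∀ i : Fin n, IsAscent π i ↔
      ∃ j : Fin k, 0 < (j : ℕ) ∧ ∃ hne : (I j).Nonempty, i = (I j).max' hne := by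
    intro i
    constructor
    · intro ha
      obtain ⟨j, hij, huniq⟩ := hI.2.1 i
      have hne : (I j).Nonempty := (hI.1 j).1.1
      have hmax : i = (I j).max' hne :=
        le_antisymm ((I j).le_max' i hij)
          (Finset.max'_le _ _ _ (max_of_ascent h (hI.1 j).1 hij ha))
      refine ⟨j, ?_, hne, hmax⟩
      by_contra hj0
      push_neg at hj0
      have hn : 0 < n := i.pos
      obtain ⟨u, hu, _⟩ := hI.2.1 (π.symm ⟨n - 1, by omega⟩)
      have hu0 : (u : ℕ) = 0 := top_mem_zero hI hn hu
      have huj : u = j := Fin.ext (by omega)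
      rw [huj] at hu
      obtain ⟨h1, h2⟩ := ha
      have hps : π (⟨(i : ℕ) + 1, h1⟩ : Fin n) ≤ π (π.symm ⟨n - 1, by omega⟩) := by
        rw [Equiv.apply_symm_apply, Fin.le_def]
        have := (π (⟨(i : ℕ) + 1, h1⟩ : Fin n)).isLt
        simp; omega
      obtain ⟨c, hc, hcs⟩ := (hI.1 j).1.2.2 (π ⟨(i : ℕ) + 1, h1⟩)
        ⟨i, hij, h2.le⟩ ⟨_, hu, hps⟩
      have hcs' : c = ⟨(i : ℕ) + 1, h1⟩ := π.injective hcs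
      have hsle := (I j).le_max' c hc
      rw [← hmax, hcs', Fin.le_def] at hsle
      simp at hsle
    · rintro ⟨j, hj, hne, rfl⟩
      have hlt := maxrun_add_one_lt h hI hj hne
      exact ⟨hlt, ascent_of_isMax h (hI.1 j) hne hlt⟩
  refine ⟨part1, ?_⟩
  have hcard : (Finset.univ.filter (fun j : Fin k => 0 < (j : ℕ))).card
      = (Finset.univ.filter (IsAscent π)).card := by
    apply Finset.card_bij (fun j _ => (I j).max' (hI.1 j).1.1)
    · intro j hj
      simp only [Finset.mem_filter] at hj ⊢
      exact ⟨Finset.mem_univ _, (part1 _).mpr ⟨j, hj.2, (hI.1 j).1.1, rfl⟩⟩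
    · intro j1 h1 j2 h2 heq
      have m1 := ((I j1).max'_mem (hI.1 j1).1.1)
      have m2 := ((I j2).max'_mem (hI.1 j2).1.1)
      rw [heq] at m1
      obtain ⟨u, hu, huniq⟩ := hI.2.1 ((I j2).max' (hI.1 j2).1.1)
      exact (huniq j1 m1).trans (huniq j2 m2).symm
    · intro i hi
      simp only [Finset.mem_filter] at hi
      obtain ⟨j, hj, hne, heq⟩ := (part1 i).mp hi.2
      exact ⟨j, by simp [hj], heq.symm⟩
  rw [← hcard]
  rcases Nat.eq_zero_or_pos k with rfl | hk
  · simp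
  · have hset : (Finset.univ.filter (fun j : Fin k => 0 < (j : ℕ)))
        = Finset.univ.erase ⟨0, hk⟩ := by
      ext j
      simp [Finset.mem_erase, Fin.ext_iff, Nat.pos_iff_ne_zero]
    rw [hset, Finset.card_erase_of_mem (Finset.mem_univ _), Finset.card_univ,
      Fintype.card_fin]

end
end ThesisStmt
end

section
/- For every 321-avoiding permutation τ of length n, the total number of inversions of τ equals the sum over all left-to-right maximum positions i of (τ_i - i). -/
open scoped Classical

namespace ThesisStmt
noncomputable section

variable {n : ℕ}

/-! In a 321-avoiding permutation every inversion `(i, j)` starts at a left-to-right maximum `i`: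
an earlier larger entry would complete a 321. If `i` is a left-to-right maximum, the `π i`
positions holding smaller values include the `i` positions before `i`, so exactly `π i - i`
of them lie after `i`. -/

open Finset

lemma inv_eq_sum_invAt (π : Equiv.Perm (Fin n)) : inv π = ∑ i, invAt π i := by
  simp only [inv, invAt, card_filter, Fintype.sum_prod_type]

lemma card_filter_apply_lt (π : Equiv.Perm (Fin n)) (v : Fin n) :
    #{j | π j < v} = v := by
  have : ({j | π j < v} : Finset (Fin n)) = (Iio v).map π.symm.toEmbedding := by
    ext j
    simp
  rw [this, card_map, Fin.card_Iio]

lemma invAt_of_isLmax {π : Equiv.Perm (Fin n)} {i : Fin n} (hi : IsLmax π i) :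
    invAt π i = π i - i := by
  have hbefore : ({j ∈ {j | π j < π i} | j < i} : Finset (Fin n)) = Iio i := by
    ext j
    simp only [mem_filter, mem_univ, true_and, mem_Iio, and_iff_right_iff_imp]
    exact hi j
  have hafter : ({j ∈ {j | π j < π i} | ¬ j < i} : Finset (Fin n)) =
      ({j | i < j ∧ π j < π i} : Finset (Fin n)) := by
    ext j
    simp only [mem_filter, mem_univ, true_and, not_lt]
    exact ⟨fun ⟨hlt, hle⟩ => ⟨hle.lt_of_ne (ne_of_apply_ne π hlt.ne'), hlt⟩,
      fun ⟨hgt, hlt⟩ => ⟨hlt, hgt.le⟩⟩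
  have := card_filter_add_card_filter_not (s := {j | π j < π i}) (· < i)
  rw [hbefore, hafter, card_filter_apply_lt, Fin.card_Iio] at this
  rw [invAt]
  omega

lemma invAt_eq_zero_of_not_isLmax {π : Equiv.Perm (Fin n)} (h : Avoids321 π) {i : Fin n}
    (hi : ¬ IsLmax π i) : invAt π i = 0 := by
  obtain ⟨k, hki, hik⟩ : ∃ k < i, π i < π k := by
    simp only [IsLmax, not_forall, not_lt, exists_prop] at hi
    obtain ⟨k, hki, hik⟩ := hi
    exact ⟨k, hki, hik.lt_of_ne (π.injective.ne hki.ne')⟩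
  rw [invAt, card_eq_zero, filter_eq_empty_iff]
  rintro j - ⟨hij, hji⟩
  exact h ⟨k, i, j, hki, hij, hji, hik⟩

/-- for 321-avoiding τ, inv(τ) = Σ_{i ∈ Lmax(τ)} (τ_i - i). -/
theorem stmt6 {n : ℕ} (τ : Equiv.Perm (Fin n)) (h : Avoids321 τ) :
    inv τ = ∑ i ∈ LmaxSet τ, ((τ i : ℕ) - (i : ℕ)) := by
  rw [inv_eq_sum_invAt, LmaxSet, sum_filter]
  refine sum_congr rfl fun i _ => ?_
  split_ifs with hi
  · exact invAt_of_isLmax hi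
  · exact invAt_eq_zero_of_not_isLmax h hi

end
end ThesisStmt
end

section
/- Let π be a 312-avoiding permutation of length n and let i ∈ [n]. Let p = plmax(π, i) be the largest left-to-right maximum position of π that is at most i. Then the number of inversions of π with first coordinate i equals inv(π, p) - (i - p), i.e., (π_p - p) - (i - p). -/
open scoped Classical

namespace ThesisStmt
noncomputable section

variable {n : ℕ}

/-- for 312-avoiding π and p = plmax(π, i) (the largest left-to-right
maximum position ≤ i), inv(π, i) = (π_p - p) - (i - p). -/
theorem stmt7 {n : ℕ} (π : Equiv.Perm (Fin n)) (h : Avoids312 π) (i p : Fin n)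
    (hp : IsLmax π p) (hpi : p ≤ i) (hmax : ∀ q : Fin n, IsLmax π q → q ≤ i → q ≤ p) :
    (invAt π i : ℤ) = ((π p : ℤ) - (p : ℤ)) - ((i : ℤ) - (p : ℤ)) := by
  -- key: values at positions ≤ i are ≤ π p
  have key : ∀ j : Fin n, j ≤ i → π j ≤ π p := by
    intro j hj
    obtain ⟨q, hq, hqmax⟩ := Finset.exists_max_image (Finset.Iic j) π ⟨j, Finset.mem_Iic.2 le_rfl⟩
    have hql : IsLmax π q := by
      intro r hr
      have hr' : r ∈ Finset.Iic j := Finset.mem_Iic.2 (le_trans hr.le (Finset.mem_Iic.1 hq))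
      exact lt_of_le_of_ne (hqmax r hr') (fun e => absurd (π.injective e) (ne_of_lt hr))
    have hqi : q ≤ i := le_trans (Finset.mem_Iic.1 hq) hj
    have hqp : q ≤ p := hmax q hql hqi
    have h1 : π q ≤ π p := by
      rcases eq_or_lt_of_le hqp with he | hl
      · rw [he]
      · exact (hp q hl).le
    exact le_trans (hqmax j (Finset.mem_Iic.2 le_rfl)) h1
  set T : Finset (Fin n) := Finset.univ.filter (fun j => π j ≤ π p) with hT
  set A : Finset (Fin n) := Finset.Iic i with hA
  set B : Finset (Fin n) := Finset.univ.filter (fun j => i < j ∧ π j ≤ π p) with hB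
  have hTcard : T.card = (π p : ℕ) + 1 := by
    have himg : T = (Finset.Iic (π p)).image π.symm := by
      ext j
      simp only [hT, Finset.mem_filter, Finset.mem_univ, true_and, Finset.mem_image,
        Finset.mem_Iic]
      constructor
      · intro hle; exact ⟨π j, hle, π.symm_apply_apply j⟩
      · rintro ⟨v, hv, rfl⟩; rwa [π.apply_symm_apply]
    rw [himg, Finset.card_image_of_injective _ π.symm.injective]
    simp [Nat.card_Iic]
  have hsplit : T = A ∪ B := by
    ext j
    simp only [hT, hA, hB, Finset.mem_union, Finset.mem_filter, Finset.mem_univ, true_and,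
      Finset.mem_Iic]
    constructor
    · intro hle
      rcases le_or_gt j i with hji | hji
      · exact Or.inl hji
      · exact Or.inr ⟨hji, hle⟩
    · rintro (hji | ⟨_, hle⟩)
      · exact key j hji
      · exact hle
  have hdisj : Disjoint A B := by
    rw [Finset.disjoint_left]
    intro j hjA hjB
    simp only [hA, Finset.mem_Iic] at hjA
    simp only [hB, Finset.mem_filter] at hjB
    exact absurd hjB.2.1 (not_lt.2 hjA)
  have hAcard : A.card = (i : ℕ) + 1 := by simp [hA, Nat.card_Iic]
  have hBinv : B = Finset.univ.filter (fun j : Fin n => i < j ∧ π j < π i) := by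
    ext j
    simp only [hB, Finset.mem_filter, Finset.mem_univ, true_and]
    constructor
    · rintro ⟨hij, hle⟩
      refine ⟨hij, ?_⟩
      have hjp : π j < π p := lt_of_le_of_ne hle (fun e => by
        have : j = p := π.injective e
        exact absurd hij (not_lt.2 (this ▸ hpi)))
      by_contra hcon
      have hij2 : π i < π j := lt_of_le_of_ne (not_lt.1 hcon) (fun e => by
        have : i = j := π.injective e
        exact absurd hij (this ▸ lt_irrefl j))
      have hpilt : p < i := by
        rcases eq_or_lt_of_le hpi with he | hl
        · exact absurd (he ▸ hij2) (not_lt.2 hjp.le)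
        · exact hl
      exact h ⟨p, i, j, hpilt, hij, hij2, hjp⟩
    · rintro ⟨hij, hlt⟩
      exact ⟨hij, le_trans hlt.le (key i le_rfl)⟩
  have hcards : (π p : ℕ) + 1 = ((i : ℕ) + 1) + invAt π i := by
    rw [← hTcard, hsplit, Finset.card_union_of_disjoint hdisj, hAcard, invAt, ← hBinv]
  have hnat : invAt π i = (π p : ℕ) - (i : ℕ) := by omega
  have hge : (i : ℕ) ≤ (π p : ℕ) := by omega
  push_cast [hnat]
  omega

end
end ThesisStmt
end

section
/- Let π be a 312-avoiding permutation of length n and let 1 ≤ y < n. Then y is a descent of π (π_y > π_{y+1}) if and only if y+1 is not a left-to-right maximum position of π. Consequently, the number of descents of π equals n - lmax(π). -/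
open scoped Classical

namespace ThesisStmt
noncomputable section

variable {n : ℕ}

/-- for 312-avoiding π, a position y < n is a descent iff y+1 is not
a left-to-right maximum position; consequently des(π) = n - lmax(π). -/
theorem stmt9 {n : ℕ} (π : Equiv.Perm (Fin n)) (h : Avoids312 π) :
    (∀ y : Fin n, ∀ hy : (y : ℕ) + 1 < n,
        (π ⟨(y : ℕ) + 1, hy⟩ < π y ↔ ¬ IsLmax π ⟨(y : ℕ) + 1, hy⟩)) ∧
      des π = n - (LmaxSet π).card := by
  classical
  have key : ∀ y : Fin n, ∀ hy : (y : ℕ) + 1 < n,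
      (π ⟨(y : ℕ) + 1, hy⟩ < π y ↔ ¬ IsLmax π ⟨(y : ℕ) + 1, hy⟩) := by
    intro y hy
    constructor
    · intro hd hl
      exact absurd (hl y (by simp [Fin.lt_def])) (not_lt.2 hd.le)
    · intro hnl
      by_contra hle
      push_neg at hle
      have hne : π y ≠ π ⟨(y : ℕ) + 1, hy⟩ := by
        intro he
        have := π.injective he
        simp [Fin.ext_iff] at this
      have hlt : π y < π ⟨(y : ℕ) + 1, hy⟩ := lt_of_le_of_ne hle hne
      simp only [IsLmax, not_forall] at hnl
      obtain ⟨j, hj, hjle⟩ := hnl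
      push_neg at hjle
      have hjne : π ⟨(y : ℕ) + 1, hy⟩ ≠ π j := by
        intro he
        have heq := π.injective he
        rw [← heq] at hj
        exact lt_irrefl _ hj
      have hjlt : π ⟨(y : ℕ) + 1, hy⟩ < π j := lt_of_le_of_ne hjle hjne
      have hjy : j < y := by
        have : j ≠ y := by
          intro he; subst he
          exact absurd hjlt (not_lt.2 hlt.le)
        have hj' : (j : ℕ) < (y : ℕ) + 1 := hj
        have : (j : ℕ) ≠ (y : ℕ) := fun he => this (Fin.ext he)
        exact Fin.lt_def.2 (by omega)
      exact h ⟨j, y, ⟨(y : ℕ) + 1, hy⟩, hjy, by simp [Fin.lt_def], hlt, hjlt⟩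
  refine ⟨key, ?_⟩
  have hcard : des π = (Finset.univ.filter (fun i : Fin n => ¬ IsLmax π i)).card := by
    unfold des
    apply Finset.card_bij
      (fun (a : Fin n) (ha : a ∈ Finset.univ.filter (IsDescent π)) =>
        (⟨(a : ℕ) + 1, ((Finset.mem_filter.1 ha).2).choose⟩ : Fin n))
    · intro a ha
      have hd := (Finset.mem_filter.1 ha).2
      have hh := hd.choose
      have hlt : π ⟨(a : ℕ) + 1, hh⟩ < π a := hd.choose_spec
      simp only [Finset.mem_filter, Finset.mem_univ, true_and]
      exact (key a hh).1 hlt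
    · intro a ha b hb he
      have := congrArg (fun x : Fin n => (x : ℕ)) he
      simp at this
      exact Fin.ext this
    · intro b hb
      have hnb : ¬ IsLmax π b := (Finset.mem_filter.1 hb).2
      have hb0 : (b : ℕ) ≠ 0 := by
        intro h0
        apply hnb
        intro j hj
        exact absurd (Fin.lt_def.1 hj) (by omega)
      obtain ⟨m, hm⟩ : ∃ m, (b : ℕ) = m + 1 := ⟨(b : ℕ) - 1, by omega⟩
      have hmn : m < n := by have := b.isLt; omega
      have hm1 : m + 1 < n := by have := b.isLt; omega
      set a : Fin n := ⟨m, hmn⟩ with ha_def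
      have hbeq : b = ⟨(a : ℕ) + 1, hm1⟩ := Fin.ext (by simp [ha_def, hm])
      have hd : IsDescent π a := ⟨hm1, (key a hm1).2 (hbeq ▸ hnb)⟩
      refine ⟨a, Finset.mem_filter.2 ⟨Finset.mem_univ _, hd⟩, ?_⟩
      exact hbeq.symm
  rw [hcard, Finset.filter_not, Finset.card_sdiff_of_subset (Finset.filter_subset _ _)]
  simp [LmaxSet]

end
end ThesisStmt
end

section
/- The Simion–Schmidt bijection ψ from 312-avoiding permutations of length n to 321-avoiding permutations of length n satisfies foze''(π) = inv(ψ(π)) for every 312-avoiding permutation π of length n. In particular, the statistic foze'' on 312-avoiding n-permutations is equidistributed with the inversion number on 321-avoiding n-permutations. -/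
open scoped Classical

namespace ThesisStmt
noncomputable section

variable {n : ℕ}

/-! ### Auxiliary lemmas for `stmt11` -/

section Stmt11Aux

variable (π : Equiv.Perm (Fin n))

lemma perm_lt_of_le' {i j : Fin n} (h : i ≠ j) (hle : π i ≤ π j) : π i < π j :=
  lt_of_le_of_ne hle (fun hc => h (π.injective hc))

lemma not_lmax' {i : Fin n} (h : ¬ IsLmax π i) : ∃ j, j < i ∧ π i < π j := by
  unfold IsLmax at h
  push_neg at h
  obtain ⟨j, hj, hle⟩ := h
  exact ⟨j, hj, perm_lt_of_le' π (ne_of_lt hj).symm hle⟩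

lemma exists_ell' (x : Fin n) : ∃ l, l ≤ x ∧ IsLmax π l ∧ ∀ t, t ≤ x → π t ≤ π l := by
  obtain ⟨l, hl, hmax⟩ := Finset.exists_max_image (Finset.Iic x) π ⟨x, Finset.mem_Iic.2 le_rfl⟩
  refine ⟨l, Finset.mem_Iic.1 hl, ?_, fun t ht => hmax t (Finset.mem_Iic.2 ht)⟩
  intro j hj
  exact perm_lt_of_le' π (ne_of_lt hj)
    (hmax j (Finset.mem_Iic.2 ((le_of_lt hj).trans (Finset.mem_Iic.1 hl))))

lemma between_lt' {i t : Fin n} (hi : IsLmax π i) (hit : i < t)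
    (hno : ∀ s, i < s → s ≤ t → ¬ IsLmax π s) : π t < π i := by
  obtain ⟨l, hlt, hlL, hlmax⟩ := exists_ell' π t
  rcases lt_or_ge i l with h | h
  · exact absurd hlL (hno l h hlt)
  · have h1 : π t ≤ π i := by
      rcases lt_or_eq_of_le h with h' | h'
      · exact (hlmax t le_rfl).trans (le_of_lt (hi l h'))
      · exact h' ▸ hlmax t le_rfl
    exact perm_lt_of_le' π hit.ne' h1

lemma dec_after' (hpi : Avoids312 π) {p a b : Fin n} (h1 : p < a) (h2 : a < b)
    (ha : π a < π p) (hb : π b < π p) : π b < π a := by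
  by_contra hcon
  push_neg at hcon
  exact hpi ⟨p, a, b, h1, h2, perm_lt_of_le' π (ne_of_lt h2) hcon, hb⟩

lemma succ_lmax' (hpi : Avoids312 π) {x : Fin n} (h : (x : ℕ) + 1 < n)
    (ha : π x < π ⟨(x : ℕ) + 1, h⟩) : IsLmax π ⟨(x : ℕ) + 1, h⟩ := by
  intro j hj
  by_contra hc
  push_neg at hc
  have hne : j ≠ (⟨(x : ℕ) + 1, h⟩ : Fin n) := ne_of_lt hj
  have hgt : π (⟨(x : ℕ) + 1, h⟩ : Fin n) < π j := perm_lt_of_le' π hne.symm hc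
  have hjx : j < x := by
    rcases lt_trichotomy j x with h' | h' | h'
    · exact h'
    · exact absurd (h' ▸ hgt) (not_lt.2 (le_of_lt ha))
    · have hx := Fin.lt_def.1 h'
      exact absurd hj (not_lt.2 (Fin.le_def.2 (by simpa using Nat.succ_le_of_lt hx)))
  exact hpi ⟨j, x, ⟨(x : ℕ) + 1, h⟩, hjx, by simp [Fin.lt_def], ha, hgt⟩

lemma occ31_2_zero (hpi : Avoids312 π) : occ31_2 π = 0 := by
  rw [occ31_2, Finset.card_eq_zero, Finset.filter_eq_empty_iff]
  rintro ⟨x, y⟩ -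
  rintro ⟨h, hlt, hv1, hv2⟩
  exact hpi ⟨x, ⟨(x : ℕ) + 1, h⟩, y, by simp [Fin.lt_def], hlt, hv1, hv2⟩

/-- Splitting the count of non-lmax positions with value below `c`. -/
lemma count_split (σ : Fin n → Fin n) (c : Fin n) (i : Fin n) (hiL : IsLmax π i)
    (hmono : ∀ j, j < i → σ j < c) :
    (Finset.univ.filter fun j => ¬ IsLmax π j ∧ σ j < c).card
      = (Finset.univ.filter fun j => ¬ IsLmax π j ∧ j < i).card
        + (Finset.univ.filter fun j => ¬ IsLmax π j ∧ i < j ∧ σ j < c).card := by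
  have hkey := Finset.card_filter_add_card_filter_not
    (s := (Finset.univ.filter fun j => ¬ IsLmax π j ∧ σ j < c)) (p := fun j => j < i)
  have hA : ((Finset.univ.filter fun j => ¬ IsLmax π j ∧ σ j < c).filter fun j => j < i)
      = (Finset.univ.filter fun j => ¬ IsLmax π j ∧ j < i) := by
    ext j
    simp only [Finset.mem_filter, Finset.mem_univ, true_and]
    exact ⟨fun h => ⟨h.1.1, h.2⟩, fun h => ⟨⟨h.1, hmono j h.2⟩, h.2⟩⟩
  have hB : ((Finset.univ.filter fun j => ¬ IsLmax π j ∧ σ j < c).filter fun j => ¬ j < i)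
      = (Finset.univ.filter fun j => ¬ IsLmax π j ∧ i < j ∧ σ j < c) := by
    ext j
    simp only [Finset.mem_filter, Finset.mem_univ, true_and]
    constructor
    · rintro ⟨⟨hnl, hv⟩, hge⟩
      have hne : j ≠ i := fun hc => hnl (hc ▸ hiL)
      exact ⟨hnl, lt_of_le_of_ne (not_lt.1 hge) hne.symm, hv⟩
    · rintro ⟨hnl, hgt, hv⟩
      exact ⟨⟨hnl, hv⟩, not_lt.2 (le_of_lt hgt)⟩
  rw [hA, hB] at hkey
  omega

end Stmt11Aux

section Stmt11Aux2

variable (π τ : Equiv.Perm (Fin n))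

/-- The counts of non-lmax positions with value below `c` agree for `π` and `τ`. -/
lemma K_card (h1 : ∀ i : Fin n, IsLmax π i ↔ IsLmax τ i)
    (h2 : ∀ i : Fin n, IsLmax π i → τ i = π i) (c : Fin n) :
    (Finset.univ.filter fun j => ¬ IsLmax π j ∧ τ j < c).card
      = (Finset.univ.filter fun j => ¬ IsLmax π j ∧ π j < c).card := by
  apply Finset.card_bij (fun j _ => π.symm (τ j))
  · intro j hj
    simp only [Finset.mem_filter, Finset.mem_univ, true_and] at hj ⊢
    refine ⟨fun hc => ?_, by simpa using hj.2⟩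
    have ht : τ (π.symm (τ j)) = τ j := by
      rw [h2 _ hc, Equiv.apply_symm_apply]
    exact hj.1 (by rwa [τ.injective ht] at hc)
  · intro a _ b _ hab
    exact τ.injective (π.symm.injective hab)
  · intro b hb
    simp only [Finset.mem_filter, Finset.mem_univ, true_and] at hb
    refine ⟨τ.symm (π b), ?_, by simp⟩
    simp only [Finset.mem_filter, Finset.mem_univ, true_and, Equiv.apply_symm_apply]
    refine ⟨fun hc => ?_, hb.2⟩
    have ht : π b = π (τ.symm (π b)) := by
      rw [← h2 _ hc, Equiv.apply_symm_apply]
    exact hb.1 (by rwa [← π.injective ht] at hc)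

/-- The per-lmax fiber counts agree. -/
lemma fiber_eq (h1 : ∀ i : Fin n, IsLmax π i ↔ IsLmax τ i)
    (h2 : ∀ i : Fin n, IsLmax π i → τ i = π i) {i : Fin n} (hi : IsLmax π i) :
    (Finset.univ.filter fun j => ¬ IsLmax π j ∧ i < j ∧ τ j < τ i).card
      = (Finset.univ.filter fun j => ¬ IsLmax π j ∧ i < j ∧ π j < π i).card := by
  have hτi : τ i = π i := h2 i hi
  have hτL : IsLmax τ i := (h1 i).1 hi
  have e1 := count_split π τ (π i) i hi (fun j hj => hτi ▸ hτL j hj)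
  have e2 := count_split π π (π i) i hi (fun j hj => hi j hj)
  have e3 := K_card π τ h1 h2 (π i)
  simp only [hτi]
  omega

end Stmt11Aux2


section Stmt11Aux3

variable (π τ : Equiv.Perm (Fin n))

lemma inv_eq_N (h1 : ∀ i : Fin n, IsLmax π i ↔ IsLmax τ i)
    (h2 : ∀ i : Fin n, IsLmax π i → τ i = π i)
    (h3 : ∀ i j : Fin n, ¬ IsLmax π i → ¬ IsLmax π j → i < j → τ i < τ j) :
    inv τ = (Finset.univ.filter fun p : Fin n × Fin n =>
      IsLmax π p.1 ∧ p.1 < p.2 ∧ π p.2 < π p.1).card := by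
  have e1 : (Finset.univ.filter fun p : Fin n × Fin n => p.1 < p.2 ∧ τ p.2 < τ p.1)
      = Finset.univ.filter (fun p : Fin n × Fin n =>
          IsLmax π p.1 ∧ ¬ IsLmax π p.2 ∧ p.1 < p.2 ∧ τ p.2 < τ p.1) := by
    ext p
    simp only [Finset.mem_filter, Finset.mem_univ, true_and]
    constructor
    · rintro ⟨hlt, hv⟩
      have hk : ¬ IsLmax τ p.2 := fun hL => absurd (hL p.1 hlt) (not_lt.2 hv.le)
      have hj : IsLmax τ p.1 := by
        by_contra hc
        exact absurd (h3 p.1 p.2 (mt (h1 p.1).1 hc) (mt (h1 p.2).1 hk) hlt) (not_lt.2 hv.le)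
      exact ⟨(h1 p.1).2 hj, mt (h1 p.2).1 hk, hlt, hv⟩
    · rintro ⟨_, _, hlt, hv⟩
      exact ⟨hlt, hv⟩
  have e3 : (Finset.univ.filter fun p : Fin n × Fin n =>
        IsLmax π p.1 ∧ p.1 < p.2 ∧ π p.2 < π p.1)
      = Finset.univ.filter (fun p : Fin n × Fin n =>
          IsLmax π p.1 ∧ ¬ IsLmax π p.2 ∧ p.1 < p.2 ∧ π p.2 < π p.1) := by
    ext p
    simp only [Finset.mem_filter, Finset.mem_univ, true_and]
    constructor
    · rintro ⟨hL, hlt, hv⟩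
      exact ⟨hL, fun hc => absurd (hc p.1 hlt) (not_lt.2 hv.le), hlt, hv⟩
    · rintro ⟨hL, _, hlt, hv⟩
      exact ⟨hL, hlt, hv⟩
  rw [inv, e1, e3]
  rw [Finset.card_eq_sum_card_fiberwise (f := Prod.fst) (t := Finset.univ)
        (fun x _ => Finset.mem_univ _),
      Finset.card_eq_sum_card_fiberwise (f := Prod.fst) (t := Finset.univ)
        (fun x _ => Finset.mem_univ _)]
  apply Finset.sum_congr rfl
  intro i _
  by_cases hi : IsLmax π i
  · have l2 : ∀ σ : Equiv.Perm (Fin n),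
        ((Finset.univ.filter fun p : Fin n × Fin n =>
          IsLmax π p.1 ∧ ¬ IsLmax π p.2 ∧ p.1 < p.2 ∧ σ p.2 < σ p.1).filter
            fun p => p.1 = i).card
        = (Finset.univ.filter fun j => ¬ IsLmax π j ∧ i < j ∧ σ j < σ i).card := by
      intro σ
      apply Finset.card_bij (fun p _ => p.2)
      · rintro ⟨a, b⟩ hp
        simp only [Finset.mem_filter, Finset.mem_univ, true_and] at hp ⊢
        obtain ⟨⟨hL, hnL, hlt, hv⟩, rfl⟩ := hp
        exact ⟨hnL, hlt, hv⟩
      · rintro ⟨a, b⟩ ha ⟨c, d⟩ hc h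
        simp only [Finset.mem_filter] at ha hc
        simp only at h
        simp [Prod.ext_iff, ha.2, hc.2, h]
      · intro b hb
        simp only [Finset.mem_filter, Finset.mem_univ, true_and] at hb
        exact ⟨(i, b), by simp [hi, hb.1, hb.2.1, hb.2.2], rfl⟩
    rw [l2 τ, l2 π, fiber_eq π τ h1 h2 hi]
  · have lz : ∀ σ : Equiv.Perm (Fin n),
        ((Finset.univ.filter fun p : Fin n × Fin n =>
          IsLmax π p.1 ∧ ¬ IsLmax π p.2 ∧ p.1 < p.2 ∧ σ p.2 < σ p.1).filter
            fun p => p.1 = i) = ∅ := by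
      intro σ
      rw [Finset.filter_eq_empty_iff]
      intro p hp h
      simp only [Finset.mem_filter] at hp
      exact hi (h ▸ hp.2.1)
    rw [lz τ, lz π]

end Stmt11Aux3


section Stmt11Aux4

variable (π : Equiv.Perm (Fin n))

/-- The minimal left-to-right maximum strictly between the coordinates of `p`. -/
def midmin (p : Fin n × Fin n) : Fin n :=
  if h : (Finset.univ.filter fun t => p.1 < t ∧ t < p.2 ∧ IsLmax π t).Nonempty then
    (Finset.univ.filter fun t => p.1 < t ∧ t < p.2 ∧ IsLmax π t).min' h
  else p.1

lemma midmin_spec {p : Fin n × Fin n} (hQ : ∃ t, p.1 < t ∧ t < p.2 ∧ IsLmax π t) :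
    p.1 < midmin π p ∧ midmin π p < p.2 ∧ IsLmax π (midmin π p) ∧
      ∀ t, p.1 < t → t < p.2 → IsLmax π t → midmin π p ≤ t := by
  obtain ⟨t0, ht0⟩ := hQ
  have hne : (Finset.univ.filter fun t => p.1 < t ∧ t < p.2 ∧ IsLmax π t).Nonempty :=
    ⟨t0, by simp [ht0.1, ht0.2.1, ht0.2.2]⟩
  rw [midmin, dif_pos hne]
  have hmem := Finset.min'_mem _ hne
  simp only [Finset.mem_filter, Finset.mem_univ, true_and] at hmem
  exact ⟨hmem.1, hmem.2.1, hmem.2.2,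
    fun t ha hb hc => Finset.min'_le _ t (by simp [ha, hb, hc])⟩

lemma descent_part (hpi : Avoids312 π) :
    ((Finset.univ.filter fun p : Fin n × Fin n =>
        IsLmax π p.1 ∧ p.1 < p.2 ∧ π p.2 < π p.1).filter
      fun p => ¬ ∃ t, p.1 < t ∧ t < p.2 ∧ IsLmax π t).card = des π := by
  rw [des]
  apply Finset.card_bij
    (fun p _ => (⟨(p.2 : ℕ) - 1, Nat.lt_of_le_of_lt (Nat.sub_le _ _) p.2.isLt⟩ : Fin n))
  · intro p hp
    simp only [Finset.mem_filter, Finset.mem_univ, true_and, not_exists] at hp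
    obtain ⟨⟨hL, hlt, hv⟩, hnot⟩ := hp
    have hpos : 1 ≤ (p.2 : ℕ) := Nat.one_le_iff_ne_zero.2 (by
      intro hz
      exact absurd (Fin.lt_def.1 hlt) (by omega))
    have hh : ((p.2 : ℕ) - 1) + 1 < n := by have := p.2.isLt; omega
    have he : (⟨((p.2 : ℕ) - 1) + 1, hh⟩ : Fin n) = p.2 := Fin.ext (by simp; omega)
    simp only [Finset.mem_filter, Finset.mem_univ, true_and, IsDescent]
    refine ⟨hh, ?_⟩
    rw [he]
    by_cases hcase : (⟨(p.2 : ℕ) - 1, Nat.lt_of_le_of_lt (Nat.sub_le _ _) p.2.isLt⟩ : Fin n) = p.1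
    · rw [hcase]; exact hv
    · have hm2 : (⟨(p.2 : ℕ) - 1, Nat.lt_of_le_of_lt (Nat.sub_le _ _) p.2.isLt⟩ : Fin n) < p.2 :=
        Fin.lt_def.2 (by simp; omega)
      have hgt : p.1 < (⟨(p.2 : ℕ) - 1, Nat.lt_of_le_of_lt (Nat.sub_le _ _) p.2.isLt⟩ : Fin n) := by
        rw [Fin.lt_def]
        have h1 := Fin.lt_def.1 hlt
        have h2 : (p.1 : ℕ) ≠ (p.2 : ℕ) - 1 := fun hc => hcase (Fin.ext (by simp [hc.symm]))
        simp; omega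
      have hmid : π (⟨(p.2 : ℕ) - 1, Nat.lt_of_le_of_lt (Nat.sub_le _ _) p.2.isLt⟩ : Fin n) < π p.1 :=
        between_lt' π hL hgt (fun s hs1 hs2 hsL => hnot s ⟨hs1, lt_of_le_of_lt hs2 hm2, hsL⟩)
      exact dec_after' π hpi hgt hm2 hmid hv
  · rintro ⟨a, b⟩ ha ⟨c, d⟩ hc h
    simp only [Finset.mem_filter, Finset.mem_univ, true_and, not_exists] at ha hc
    obtain ⟨⟨haL, halt, hav⟩, hanot⟩ := ha
    obtain ⟨⟨hcL, hclt, hcv⟩, hcnot⟩ := hc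
    have hb1 : 1 ≤ (b : ℕ) := by have := Fin.lt_def.1 halt; omega
    have hd1 : 1 ≤ (d : ℕ) := by have := Fin.lt_def.1 hclt; omega
    have hval : (b : ℕ) - 1 = (d : ℕ) - 1 := by simpa [Fin.ext_iff] using h
    have hbd : b = d := Fin.ext (by omega)
    subst hbd
    have hac : a = c := by
      rcases lt_trichotomy a c with h' | h' | h'
      · exact absurd ⟨h', hclt, hcL⟩ (hanot c)
      · exact h'
      · exact absurd ⟨h', halt, haL⟩ (hcnot a)
    simp [hac]
  · intro x hx
    simp only [Finset.mem_filter, Finset.mem_univ, true_and, IsDescent] at hx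
    obtain ⟨h, hdes⟩ := hx
    obtain ⟨l, hlx, hlL, hlmax⟩ := exists_ell' π x
    refine ⟨(l, ⟨(x : ℕ) + 1, h⟩), ?_, Fin.ext (by simp)⟩
    simp only [Finset.mem_filter, Finset.mem_univ, true_and, not_exists]
    refine ⟨⟨hlL, ?_, ?_⟩, ?_⟩
    · exact Fin.lt_def.2 (by have := Fin.le_def.1 hlx; simp; omega)
    · exact lt_of_lt_of_le hdes (hlmax x le_rfl)
    · rintro t ⟨ht1, ht2, htL⟩
      have htx : t ≤ x := Fin.le_def.2 (by have := Fin.lt_def.1 ht2; simp at this; omega)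
      exact absurd (hlmax t htx) (not_le.2 (htL l ht1))

lemma occ_part (hpi : Avoids312 π) :
    ((Finset.univ.filter fun p : Fin n × Fin n =>
        IsLmax π p.1 ∧ p.1 < p.2 ∧ π p.2 < π p.1).filter
      fun p => ∃ t, p.1 < t ∧ t < p.2 ∧ IsLmax π t).card = occ23_1 π := by
  rw [occ23_1]
  apply Finset.card_bij (fun p _ =>
    ((⟨(midmin π p : ℕ) - 1, Nat.lt_of_le_of_lt (Nat.sub_le _ _) (midmin π p).isLt⟩ : Fin n), p.2))
  · intro p hp
    simp only [Finset.mem_filter, Finset.mem_univ, true_and] at hp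
    obtain ⟨⟨hL, hlt, hv⟩, hQ⟩ := hp
    obtain ⟨hm1, hm2, hmL, hmmin⟩ := midmin_spec π hQ
    have hpos : 1 ≤ (midmin π p : ℕ) := by have := Fin.lt_def.1 hm1; omega
    have hh : ((midmin π p : ℕ) - 1) + 1 < n := by have := (midmin π p).isLt; omega
    have he : (⟨((midmin π p : ℕ) - 1) + 1, hh⟩ : Fin n) = midmin π p := Fin.ext (by simp; omega)
    simp only [Finset.mem_filter, Finset.mem_univ, true_and]
    refine ⟨hh, ?_, ?_, ?_⟩
    · rw [he]; exact hm2
    · by_cases hcase :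
        (⟨(midmin π p : ℕ) - 1, Nat.lt_of_le_of_lt (Nat.sub_le _ _) (midmin π p).isLt⟩ : Fin n) = p.1
      · rw [hcase]; exact hv
      · have hlt2 : (⟨(midmin π p : ℕ) - 1,
            Nat.lt_of_le_of_lt (Nat.sub_le _ _) (midmin π p).isLt⟩ : Fin n) < p.2 :=
          lt_trans (Fin.lt_def.2 (by simp; omega)) hm2
        have hgt : p.1 < (⟨(midmin π p : ℕ) - 1,
            Nat.lt_of_le_of_lt (Nat.sub_le _ _) (midmin π p).isLt⟩ : Fin n) := by
          rw [Fin.lt_def]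
          have h1 := Fin.lt_def.1 hm1
          have h2 : (p.1 : ℕ) ≠ (midmin π p : ℕ) - 1 := fun hc => hcase (Fin.ext (by simp [hc.symm]))
          simp; omega
        have hmid : π (⟨(midmin π p : ℕ) - 1,
            Nat.lt_of_le_of_lt (Nat.sub_le _ _) (midmin π p).isLt⟩ : Fin n) < π p.1 := by
          apply between_lt' π hL hgt
          intro s hs1 hs2 hsL
          have hsm : s < midmin π p := lt_of_le_of_lt hs2 (Fin.lt_def.2 (by simp; omega))
          exact absurd (hmmin s hs1 (lt_trans hsm hm2) hsL) (not_le.2 hsm)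
        exact dec_after' π hpi hgt hlt2 hmid hv
    · rw [he]
      exact hmL _ (Fin.lt_def.2 (by simp; omega))
  · rintro ⟨a, b⟩ ha ⟨c, d⟩ hc h
    simp only [Finset.mem_filter, Finset.mem_univ, true_and] at ha hc
    obtain ⟨⟨haL, halt, hav⟩, haQ⟩ := ha
    obtain ⟨⟨hcL, hclt, hcv⟩, hcQ⟩ := hc
    obtain ⟨ham1, ham2, hamL, hammin⟩ := midmin_spec π (p := (a, b)) haQ
    obtain ⟨hcm1, hcm2, hcmL, hcmmin⟩ := midmin_spec π (p := (c, d)) hcQ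
    have h' := Prod.ext_iff.1 h
    have hbd : b = d := by simpa using h'.2
    have hval : (midmin π (a, b) : ℕ) - 1 = (midmin π (c, d) : ℕ) - 1 := by
      simpa [Fin.ext_iff] using h'.1
    have hap : 1 ≤ (midmin π (a, b) : ℕ) := by have := Fin.lt_def.1 ham1; omega
    have hcp : 1 ≤ (midmin π (c, d) : ℕ) := by have := Fin.lt_def.1 hcm1; omega
    have hmm : midmin π (a, b) = midmin π (c, d) := Fin.ext (by omega)
    subst hbd
    have hac : a = c := by
      rcases lt_trichotomy a c with h2 | h2 | h2
      · have hcb : c < b := lt_trans hcm1 hcm2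
        have hle := hammin c h2 hcb hcL
        rw [hmm] at hle
        exact absurd hle (not_le.2 hcm1)
      · exact h2
      · have hab : a < b := lt_trans ham1 ham2
        have hle := hcmmin a h2 hab haL
        rw [← hmm] at hle
        exact absurd hle (not_le.2 ham1)
    simp [hac]
  · rintro ⟨x, y⟩ hb
    simp only [Finset.mem_filter, Finset.mem_univ, true_and] at hb
    obtain ⟨h, hxy, hyx, hasc⟩ := hb
    obtain ⟨l, hlx, hlL, hlmax⟩ := exists_ell' π x
    have hlsucc : l < (⟨(x : ℕ) + 1, h⟩ : Fin n) :=
      Fin.lt_def.2 (by have := Fin.le_def.1 hlx; simp; omega)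
    have hsL : IsLmax π (⟨(x : ℕ) + 1, h⟩ : Fin n) := succ_lmax' π hpi h hasc
    have hly : l < y := lt_trans hlsucc hxy
    have hmemN : IsLmax π l ∧ l < y ∧ π y < π l :=
      ⟨hlL, hly, lt_of_lt_of_le hyx (hlmax x le_rfl)⟩
    have hQ : ∃ t, (l, y).1 < t ∧ t < (l, y).2 ∧ IsLmax π t := ⟨⟨(x : ℕ) + 1, h⟩, hlsucc, hxy, hsL⟩
    refine ⟨(l, y), ?_, ?_⟩
    · simp only [Finset.mem_filter, Finset.mem_univ, true_and]
      exact ⟨hmemN, hQ⟩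
    · obtain ⟨hm1, hm2, hmL, hmmin⟩ := midmin_spec π hQ
      have hmeq : midmin π (l, y) = (⟨(x : ℕ) + 1, h⟩ : Fin n) := by
        refine le_antisymm (hmmin _ hlsucc hxy hsL) ?_
        rw [Fin.le_def]
        simp only
        by_contra hcon
        push_neg at hcon
        have hmx : midmin π (l, y) ≤ x := Fin.le_def.2 (by omega)
        exact absurd (hlmax _ hmx) (not_le.2 (hmL l hm1))
      refine Prod.ext_iff.2 ⟨Fin.ext ?_, rfl⟩
      simp [hmeq]

end Stmt11Aux4

/-- if τ is the image of the 312-avoiding permutation π under the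
Simion–Schmidt bijection (same left-to-right maxima positions with the same values,
remaining values placed in increasing order), then τ avoids 321 and
foze''(π) = inv(τ). -/
theorem stmt11 {n : ℕ} (π τ : Equiv.Perm (Fin n)) (hπ : Avoids312 π)
    (h1 : ∀ i : Fin n, IsLmax π i ↔ IsLmax τ i)
    (h2 : ∀ i : Fin n, IsLmax π i → τ i = π i)
    (h3 : ∀ i j : Fin n, ¬ IsLmax π i → ¬ IsLmax π j → i < j → τ i < τ j) :
    Avoids321 τ ∧ fozePP π = inv τ := by
  constructor
  · rintro ⟨i, j, k, hij, hjk, hkj, hji⟩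
    have hk : ¬ IsLmax τ k := fun hL => absurd (hL j hjk) (not_lt.2 hkj.le)
    have hj : ¬ IsLmax τ j := fun hL => absurd (hL i hij) (not_lt.2 hji.le)
    exact absurd (h3 j k (mt (h1 j).1 hj) (mt (h1 k).1 hk) hjk) (not_lt.2 hkj.le)
  · have hz := occ31_2_zero π hπ
    have hN := inv_eq_N π τ h1 h2 h3
    have hsplit := Finset.card_filter_add_card_filter_not
      (s := Finset.univ.filter fun p : Fin n × Fin n =>
        IsLmax π p.1 ∧ p.1 < p.2 ∧ π p.2 < π p.1)
      (p := fun p => ∃ t, p.1 < t ∧ t < p.2 ∧ IsLmax π t)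
    beta_reduce at hsplit
    have hocc := occ_part π hπ
    have hdes := descent_part π hπ
    rw [fozePP, hz, hN]
    omega

end
end ThesisStmt
end

section
/- For each n, the statistics foze'' and inv are equidistributed on 312-avoiding and 321-avoiding n-permutations respectively: Σ_{π ∈ S_n(312)} q^{foze''(π)} = Σ_{τ ∈ S_n(321)} q^{inv(τ)} as polynomials in q. -/
open scoped Classical

namespace ThesisStmt
noncomputable section

variable {n : ℕ}

/-!
On the respective classes, both statistics only depend on the left-to-right maxima and their values.
For a 321-avoider every inversion (i, j) starts at a left-to-right maximum i; for a 312-avoider no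
[31]2 occurs, and the inversions starting at a left-to-right maximum i are in bijection with the
[23]1-occurrences (i - 1, i, j) and the descents (j - 1, j), according to whether some letter before
i exceeds π j. A left-to-right maximum i starts exactly π i - i inversions, so in both cases the
statistic is Σ (π i - i) over the left-to-right maxima.

It remains to see that recording the left-to-right maxima with their values is a bijection from
S_n(312), and one from S_n(321), onto the same set. If two permutations with the same maxima first
differ at j, the one with the larger value at j has no maximum at j, which yields a 312 in the other
and a 321 in itself. Conversely, among the permutations with given maxima, one of maximal
(minimal) weight Σ i π(i) avoids 321 (312): swapping the two smaller letters of a 321 (312) keeps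
the maxima, as both letters stay below the first one, and increases (decreases) the weight.
-/

open Finset

lemma sum_comp_eq_of_image_eq {α β M : Type*} [DecidableEq β] [AddCommMonoid M]
    {s t : Finset α} {g : α → β} (f : β → M) (hs : Set.InjOn g s) (ht : Set.InjOn g t)
    (h : s.image g = t.image g) : ∑ x ∈ s, f (g x) = ∑ x ∈ t, f (g x) := by
  rw [← sum_image hs, ← sum_image ht, h]

lemma not_isLmax_iff {π : Equiv.Perm (Fin n)} {i : Fin n} :
    ¬ IsLmax π i ↔ ∃ j < i, π i < π j := by
  simp only [IsLmax, not_forall, not_lt, exists_prop]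
  exact exists_congr fun j => and_congr_right fun hj => (π.injective.ne hj.ne').le_iff_lt

lemma Avoids312.lt_apply_of_le_of_lt {π : Equiv.Perm (Fin n)} (h : Avoids312 π)
    {x y j : Fin n} (hxy : x ≤ y) (hyj : y < j) (hx : π j < π x) : π j < π y := by
  obtain ⟨m, hm⟩ := y
  induction m with
  | zero => rwa [show x = ⟨0, hm⟩ from Fin.ext (Nat.le_zero.mp hxy)] at hx
  | succ m ih =>
    rcases eq_or_lt_of_le hxy with rfl | hlt
    · exact hx
    have hprev : π j < π ⟨m, by omega⟩ :=
      ih _ (Nat.lt_succ_iff.mp hlt) (Nat.lt_of_succ_lt hyj)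
    refine lt_of_le_of_ne (not_lt.mp fun hlt' => ?_) fun he => hyj.ne (π.injective he).symm
    exact h ⟨⟨m, by omega⟩, ⟨m + 1, hm⟩, j, Nat.lt_succ_self m, hyj, hlt', hprev⟩

def lmaxData (π : Equiv.Perm (Fin n)) (i : Fin n) : Option (Fin n) :=
  if IsLmax π i then some (π i) else none

section LmaxData

variable {σ τ : Equiv.Perm (Fin n)}

lemma isLmax_of_lmaxData_eq (h : lmaxData σ = lmaxData τ) {i : Fin n} (hi : IsLmax τ i) :
    IsLmax σ i ∧ σ i = τ i := by
  have hi' := congrFun h i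
  simp only [lmaxData, if_pos hi] at hi'
  split_ifs at hi' with hσ
  exact ⟨hσ, Option.some_injective _ hi'⟩

lemma lt_symm_apply_of_first_ne {j : Fin n} (hagree : ∀ i < j, σ i = τ i) (hj : σ j ≠ τ j) :
    j < σ.symm (τ j) := by
  by_contra! hk
  rcases hk.lt_or_eq with hk | hk
  · have h := hagree _ hk
    rw [Equiv.apply_symm_apply] at h
    exact hk.ne (τ.injective h.symm)
  · have h := σ.apply_symm_apply (τ j)
    rw [hk] at h
    exact hj h

lemma exists_first_ne (hne : σ ≠ τ) : ∃ j, σ j ≠ τ j ∧ ∀ i < j, σ i = τ i := by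
  obtain ⟨j, hj, hmin⟩ := wellFounded_lt.has_min {j | σ j ≠ τ j}
    (not_forall.mp (mt Equiv.ext hne))
  exact ⟨j, hj, fun i hi => not_not.mp fun h => hmin i h hi⟩

lemma not_avoids312_and_not_avoids321_of_lmaxData_eq (h : lmaxData σ = lmaxData τ) {j : Fin n}
    (hagree : ∀ i < j, σ i = τ i) (hj : σ j < τ j) : ¬ Avoids312 σ ∧ ¬ Avoids321 τ := by
  obtain ⟨i, hij, hi⟩ := not_isLmax_iff.mp fun hl => hj.ne (isLmax_of_lmaxData_eq h hl).2
  have hσ := lt_symm_apply_of_first_ne hagree hj.ne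
  have hτ := lt_symm_apply_of_first_ne (fun i hi => (hagree i hi).symm) hj.ne'
  refine ⟨fun h312 => h312 ⟨i, j, _, hij, hσ, by simpa using hj, ?_⟩,
    fun h321 => h321 ⟨i, j, _, hij, hτ, by simpa using hj, hi⟩⟩
  simpa [hagree i hij] using hi

lemma injOn_lmaxData_avoids312 : Set.InjOn lmaxData {π : Equiv.Perm (Fin n) | Avoids312 π} := by
  intro σ hσ τ hτ h
  by_contra hne
  obtain ⟨j, hj, hagree⟩ := exists_first_ne hne
  rcases hj.lt_or_gt with hlt | hgt
  · exact (not_avoids312_and_not_avoids321_of_lmaxData_eq h hagree hlt).1 hσ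
  · exact (not_avoids312_and_not_avoids321_of_lmaxData_eq h.symm
      (fun i hi => (hagree i hi).symm) hgt).1 hτ

lemma injOn_lmaxData_avoids321 : Set.InjOn lmaxData {π : Equiv.Perm (Fin n) | Avoids321 π} := by
  intro σ hσ τ hτ h
  by_contra hne
  obtain ⟨j, hj, hagree⟩ := exists_first_ne hne
  rcases hj.lt_or_gt with hlt | hgt
  · exact (not_avoids312_and_not_avoids321_of_lmaxData_eq h hagree hlt).2 hτ
  · exact (not_avoids312_and_not_avoids321_of_lmaxData_eq h.symm
      (fun i hi => (hagree i hi).symm) hgt).2 hσ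

lemma isLmax_iff_of_dominated {S : Set (Fin n)}
    (hS : ∀ y ∈ S, ∃ i ∉ S, i < y ∧ σ y < σ i) (x : Fin n) :
    IsLmax σ x ↔ x ∉ S ∧ ∀ y < x, y ∉ S → σ y < σ x := by
  refine ⟨fun hx => ⟨fun hxS => ?_, fun y hy _ => hx y hy⟩, fun ⟨_, hx⟩ y hy => ?_⟩
  · obtain ⟨i, -, hi, hσi⟩ := hS x hxS
    exact (hx i hi).not_gt hσi
  · by_cases hyS : y ∈ S
    · obtain ⟨i, hiS, hi, hσi⟩ := hS y hyS
      exact hσi.trans (hx i (hi.trans hy) hiS)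
    · exact hx y hy hyS

lemma lmaxData_eq_of_dominated {S : Set (Fin n)} (heq : ∀ x ∉ S, σ x = τ x)
    (hσ : ∀ y ∈ S, ∃ i ∉ S, i < y ∧ σ y < σ i)
    (hτ : ∀ y ∈ S, ∃ i ∉ S, i < y ∧ τ y < τ i) :
    lmaxData σ = lmaxData τ := by
  funext x
  simp only [lmaxData, isLmax_iff_of_dominated hσ, isLmax_iff_of_dominated hτ]
  by_cases hx : x ∈ S
  · simp [hx]
  · have hall : (∀ y < x, y ∉ S → σ y < σ x) ↔ ∀ y < x, y ∉ S → τ y < τ x :=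
      forall₂_congr fun y _ => imp_congr_right fun hy => by rw [heq y hy, heq x hx]
    simp only [hx, not_false_eq_true, true_and]
    exact if_congr hall (by rw [heq x hx]) rfl

lemma lmaxData_mul_swap {i j k : Fin n} (hij : i < j) (hjk : j < k) (hj : σ j < σ i)
    (hk : σ k < σ i) : lmaxData (σ * Equiv.swap j k) = lmaxData σ := by
  have hiS : i ∉ ({j, k} : Set (Fin n)) := by
    simp [hij.ne, (hij.trans hjk).ne]
  have hσi : (σ * Equiv.swap j k) i = σ i := by
    simp [Equiv.swap_apply_of_ne_of_ne hij.ne (hij.trans hjk).ne]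
  apply lmaxData_eq_of_dominated (S := {j, k})
  · intro x hx
    simp only [Set.mem_insert_iff, Set.mem_singleton_iff, not_or] at hx
    simp [Equiv.swap_apply_of_ne_of_ne hx.1 hx.2]
  · rintro y (rfl | rfl)
    · exact ⟨i, hiS, hij, by simpa [hσi] using hk⟩
    · exact ⟨i, hiS, hij.trans hjk, by simpa [hσi] using hj⟩
  · rintro y (rfl | rfl)
    · exact ⟨i, hiS, hij, hj⟩
    · exact ⟨i, hiS, hij.trans hjk, hk⟩

def posWeight (σ : Equiv.Perm (Fin n)) : ℤ := ∑ x : Fin n, (x : ℤ) * σ x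

lemma posWeight_mul_swap {j k : Fin n} (hjk : j ≠ k) :
    posWeight (σ * Equiv.swap j k) = posWeight σ + ((k : ℤ) - j) * ((σ j : ℤ) - σ k) := by
  have hreindex : posWeight (σ * Equiv.swap j k) = ∑ x, (Equiv.swap j k x : ℤ) * σ x := by
    rw [posWeight, ← Equiv.sum_comp (Equiv.swap j k)]
    simp
  have hdiff : ∑ x, ((Equiv.swap j k x : ℤ) - x) * σ x =
      ((k : ℤ) - j) * σ j + ((j : ℤ) - k) * σ k := by
    rw [Fintype.sum_eq_add j k hjk]
    · simp
    · rintro x ⟨hxj, hxk⟩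
      simp [Equiv.swap_apply_of_ne_of_ne hxj hxk]
  rw [hreindex, posWeight, ← sub_eq_iff_eq_add', ← sum_sub_distrib]
  simp only [← sub_mul, hdiff]
  ring

lemma exists_avoids321_lmaxData_eq (π : Equiv.Perm (Fin n)) :
    ∃ τ, Avoids321 τ ∧ lmaxData τ = lmaxData π := by
  obtain ⟨τ, hτ, hmax⟩ := (univ.filter fun σ => lmaxData σ = lmaxData π).exists_max_image
    posWeight ⟨π, by simp⟩
  rw [mem_filter] at hτ
  refine ⟨τ, fun ⟨i, j, k, hij, hjk, hkj, hji⟩ => ?_, hτ.2⟩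
  have hle := hmax (τ * Equiv.swap j k)
    (by simp [lmaxData_mul_swap hij hjk hji (hkj.trans hji), hτ.2])
  rw [posWeight_mul_swap hjk.ne] at hle
  have : (0 : ℤ) < ((k : ℤ) - j) * ((τ j : ℤ) - τ k) :=
    mul_pos (sub_pos.mpr (by exact_mod_cast hjk)) (sub_pos.mpr (by exact_mod_cast hkj))
  linarith

lemma exists_avoids312_lmaxData_eq (π : Equiv.Perm (Fin n)) :
    ∃ τ, Avoids312 τ ∧ lmaxData τ = lmaxData π := by
  obtain ⟨τ, hτ, hmin⟩ := (univ.filter fun σ => lmaxData σ = lmaxData π).exists_min_image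
    posWeight ⟨π, by simp⟩
  rw [mem_filter] at hτ
  refine ⟨τ, fun ⟨i, j, k, hij, hjk, hjk', hki⟩ => ?_, hτ.2⟩
  have hle := hmin (τ * Equiv.swap j k)
    (by simp [lmaxData_mul_swap hij hjk (hjk'.trans hki) hki, hτ.2])
  rw [posWeight_mul_swap hjk.ne] at hle
  have : ((k : ℤ) - j) * ((τ j : ℤ) - τ k) < 0 :=
    mul_neg_of_pos_of_neg (sub_pos.mpr (by exact_mod_cast hjk))
      (sub_neg.mpr (by exact_mod_cast hjk'))
  linarith

end LmaxData

def lmaxInversions (π : Equiv.Perm (Fin n)) : Finset (Fin n × Fin n) :=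
  {p | IsLmax π p.1 ∧ p.1 < p.2 ∧ π p.2 < π p.1}

def excess (d : Fin n → Option (Fin n)) : ℕ :=
  ∑ i, (d i).elim 0 fun v => (v : ℕ) - i

section Statistics

variable {π : Equiv.Perm (Fin n)}

lemma card_lmaxInversions (π : Equiv.Perm (Fin n)) :
    #(lmaxInversions π) = ∑ i ∈ {i | IsLmax π i}, invAt π i := by
  simp only [lmaxInversions, invAt, card_filter, Fintype.sum_prod_type, sum_filter]
  refine sum_congr rfl fun i _ => ?_
  split_ifs with hi <;> simp [hi]

lemma excess_lmaxData (π : Equiv.Perm (Fin n)) : excess (lmaxData π) = #(lmaxInversions π) := by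
  rw [card_lmaxInversions, excess, sum_filter]
  refine sum_congr rfl fun i _ => ?_
  by_cases hi : IsLmax π i <;> simp [lmaxData, hi, invAt_of_isLmax]

lemma Avoids321.inv_eq_excess (h : Avoids321 π) : inv π = excess (lmaxData π) := by
  rw [excess_lmaxData, inv, lmaxInversions]
  congr 1
  refine filter_congr fun p _ => ⟨fun hp => ⟨?_, hp⟩, fun hp => hp.2⟩
  by_contra hl
  obtain ⟨k, hk, hpk⟩ := not_isLmax_iff.mp hl
  exact h ⟨k, p.1, p.2, hk, hp.1, hp.2, hpk⟩

lemma Avoids312.occ31_2_eq_zero (h : Avoids312 π) : occ31_2 π = 0 := by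
  rw [occ31_2, card_eq_zero, filter_eq_empty_iff]
  rintro ⟨x, y⟩ _ ⟨hx, hxy, hyx, hxy'⟩
  exact h ⟨x, ⟨x + 1, hx⟩, y, by simp [Fin.lt_def], hxy, hyx, hxy'⟩

lemma card_lmaxInversions_filter_not_exists :
    #((lmaxInversions π).filter fun p => ¬ ∃ k < p.1, π p.2 < π k) =
      #{y | ¬ IsLmax π y} := by
  refine card_bij (fun p _ => p.2) ?_ ?_ ?_
  · rintro ⟨i, y⟩ hp
    simp only [lmaxInversions, mem_filter, mem_univ, true_and] at hp ⊢
    exact not_isLmax_iff.mpr ⟨i, hp.1.2.1, hp.1.2.2⟩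
  · rintro ⟨i, y⟩ hp ⟨i', y'⟩ hp' (rfl : y = y')
    simp only [lmaxInversions, mem_filter, mem_univ, true_and, not_exists, not_and, not_lt]
      at hp hp'
    rcases lt_trichotomy i i' with hlt | rfl | hgt
    · exact absurd (hp'.2 i hlt) (not_le.mpr hp.1.2.2)
    · rfl
    · exact absurd (hp.2 i' hgt) (not_le.mpr hp'.1.2.2)
  · intro y hy
    simp only [mem_filter, mem_univ, true_and] at hy
    obtain ⟨k, hky, hyk⟩ := not_isLmax_iff.mp hy
    obtain ⟨i, hyi, hmin⟩ := wellFounded_lt.has_min {i | π y < π i} ⟨k, hyk⟩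
    have hiy : i < y := lt_of_le_of_lt (not_lt.mp fun hki => hmin k hyk hki) hky
    refine ⟨(i, y), ?_, rfl⟩
    simp only [lmaxInversions, mem_filter, mem_univ, true_and]
    refine ⟨⟨fun j hj => ?_, hiy, hyi⟩, fun ⟨j, hj, hyj⟩ => hmin j hyj hj⟩
    exact lt_of_not_ge fun hij => hmin j (lt_of_lt_of_le hyi hij) hj

lemma Avoids312.card_lmaxInversions_filter_exists (h : Avoids312 π) :
    #((lmaxInversions π).filter fun p => ∃ k < p.1, π p.2 < π k) = occ23_1 π := by
  unfold occ23_1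
  refine card_bij (fun p _ => (⟨p.1 - 1, by omega⟩, p.2)) ?_ ?_ ?_
  · rintro ⟨i, y⟩ hp
    simp only [lmaxInversions, mem_filter, mem_univ, true_and] at hp ⊢
    obtain ⟨⟨hi, hiy, hyi⟩, k, hki, hyk⟩ := hp
    rw [Fin.lt_def] at hki
    have hsucc : (⟨(i : ℕ) - 1 + 1, by omega⟩ : Fin n) = i := Fin.ext (by simp; omega)
    refine ⟨by omega, ?_⟩
    rw [hsucc]
    refine ⟨hiy, h.lt_apply_of_le_of_lt (x := k) ?_ ?_ hyk, hi _ ?_⟩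
    all_goals simp only [Fin.le_def, Fin.lt_def] at hiy ⊢; omega
  · rintro ⟨i, y⟩ hp ⟨i', y'⟩ hp' heq
    simp only [lmaxInversions, mem_filter, mem_univ, true_and, Prod.mk.injEq, Fin.mk.injEq]
      at hp hp' heq ⊢
    obtain ⟨k, hki, -⟩ := hp.2
    obtain ⟨k', hki', -⟩ := hp'.2
    rw [Fin.lt_def] at hki hki'
    exact ⟨Fin.ext (by omega), heq.2⟩
  · rintro ⟨x, y⟩ hp
    simp only [mem_filter, mem_univ, true_and] at hp
    obtain ⟨hx, hxy, hyx, hasc⟩ := hp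
    refine ⟨(⟨x + 1, hx⟩, y), ?_, by simp⟩
    simp only [lmaxInversions, mem_filter, mem_univ, true_and]
    refine ⟨⟨fun j hj => ?_, hxy, hyx.trans hasc⟩, x, by simp [Fin.lt_def], hyx⟩
    rcases (Fin.le_def.mpr (Nat.lt_succ_iff.mp (Fin.lt_def.mp hj))).lt_or_eq with hjx | rfl
    · exact lt_of_not_ge fun hle => h ⟨j, x, ⟨x + 1, hx⟩, hjx, by simp [Fin.lt_def], hasc,
        lt_of_le_of_ne hle fun he => hj.ne (π.injective he).symm⟩
    · exact hasc

lemma Avoids312.des_eq_card_not_isLmax (h : Avoids312 π) : des π = #{y | ¬ IsLmax π y} := by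
  symm
  refine card_bij (fun y _ => ⟨y - 1, by omega⟩) ?_ ?_ ?_
  · intro y hy
    simp only [mem_filter, mem_univ, true_and] at hy ⊢
    obtain ⟨k, hky, hyk⟩ := not_isLmax_iff.mp hy
    rw [Fin.lt_def] at hky
    have hsucc : (⟨(y : ℕ) - 1 + 1, by omega⟩ : Fin n) = y := Fin.ext (by simp; omega)
    refine ⟨by dsimp only; omega, ?_⟩
    rw [hsucc]
    exact h.lt_apply_of_le_of_lt (x := k) (by simp [Fin.le_def]; omega)
      (by simp [Fin.lt_def]; omega) hyk
  · intro y hy y' hy' heq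
    simp only [mem_filter, mem_univ, true_and, Fin.mk.injEq] at hy hy' heq
    obtain ⟨k, hky, -⟩ := not_isLmax_iff.mp hy
    obtain ⟨k', hky', -⟩ := not_isLmax_iff.mp hy'
    rw [Fin.lt_def] at hky hky'
    exact Fin.ext (by omega)
  · intro x hx
    simp only [mem_filter, mem_univ, true_and] at hx
    obtain ⟨hx, hdes⟩ := hx
    refine ⟨⟨x + 1, hx⟩, ?_, by simp⟩
    simp only [mem_filter, mem_univ, true_and]
    exact not_isLmax_iff.mpr ⟨x, by simp [Fin.lt_def], hdes⟩

lemma Avoids312.fozePP_eq_excess (h : Avoids312 π) : fozePP π = excess (lmaxData π) := by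
  rw [excess_lmaxData, ← card_filter_add_card_filter_not (fun p => ∃ k < p.1, π p.2 < π k),
    h.card_lmaxInversions_filter_exists, card_lmaxInversions_filter_not_exists,
    ← h.des_eq_card_not_isLmax, fozePP, h.occ31_2_eq_zero, add_zero, add_zero]

end Statistics

lemma image_lmaxData_avoids312_eq (n : ℕ) :
    ({π | Avoids312 π} : Finset (Equiv.Perm (Fin n))).image lmaxData =
      ({τ | Avoids321 τ} : Finset (Equiv.Perm (Fin n))).image lmaxData := by
  ext d
  simp only [mem_image, mem_filter, mem_univ, true_and]
  constructor
  · rintro ⟨π, -, rfl⟩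
    exact exists_avoids321_lmaxData_eq π
  · rintro ⟨τ, -, rfl⟩
    exact exists_avoids312_lmaxData_eq τ

/-- foze'' on S_n(312) and inv on S_n(321) are equidistributed:
Σ_{π ∈ S_n(312)} q^{foze''(π)} = Σ_{τ ∈ S_n(321)} q^{inv(τ)} as polynomials. -/
theorem stmt12 (n : ℕ) :
    ∑ π ∈ Finset.univ.filter (fun π : Equiv.Perm (Fin n) => Avoids312 π),
        (Polynomial.X : Polynomial ℕ) ^ fozePP π =
      ∑ τ ∈ Finset.univ.filter (fun τ : Equiv.Perm (Fin n) => Avoids321 τ),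
        (Polynomial.X : Polynomial ℕ) ^ inv τ := by
  calc _ = ∑ π ∈ {π | Avoids312 π}, (Polynomial.X : Polynomial ℕ) ^ excess (lmaxData π) :=
        sum_congr rfl fun π hπ => by rw [(mem_filter.mp hπ).2.fozePP_eq_excess]
    _ = ∑ τ ∈ {τ | Avoids321 τ}, Polynomial.X ^ excess (lmaxData τ) :=
        sum_comp_eq_of_image_eq (fun d => Polynomial.X ^ excess d)
          (injOn_lmaxData_avoids312.mono fun π hπ => (mem_filter.mp hπ).2)
          (injOn_lmaxData_avoids321.mono fun τ hτ => (mem_filter.mp hτ).2)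
          (image_lmaxData_avoids312_eq n)
    _ = _ := sum_congr rfl fun τ hτ => by rw [(mem_filter.mp hτ).2.inv_eq_excess]

end
end ThesisStmt
end

section
/- Let π be a 231-avoiding permutation of length n with inverse descent runs I₁,...,I_k ordered by decreasing maximum value. Then {max(I₁), max(I₂), ..., max(I_k)} equals the set of positions of the right-to-left minima of π. -/
open scoped Classical

namespace ThesisStmt
noncomputable section

variable {n : ℕ}

/-- for 231-avoiding π with inverse descent runs I₁,...,I_k, the set
{max I₁, ..., max I_k} (maxima of the position sets) is exactly the set of
right-to-left minima positions of π. -/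
theorem stmt17 {n k : ℕ} (π : Equiv.Perm (Fin n)) (h : Avoids231 π)
    (I : Fin k → Finset (Fin n)) (hI : IDRFamily π I) :
    ∀ x : Fin n, (∃ j : Fin k, x ∈ I j ∧ ∀ y ∈ I j, y ≤ x) ↔ IsRmin π x := by
  obtain ⟨hIDR, hpart, _⟩ := hI
  intro x
  constructor
  · rintro ⟨j, hxj, hmax⟩ y hxy
    obtain ⟨⟨hne0, hdec, hintv⟩, hmaxl⟩ := hIDR j
    by_contra hlt
    push_neg at hlt
    have hne : π y ≠ π x := fun h => absurd (π.injective h) (ne_of_gt hxy)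
    have hyx : π y < π x := lt_of_le_of_ne hlt hne
    have hpos : 0 < (π x : ℕ) := lt_of_le_of_lt (Nat.zero_le _) hyx
    set v : Fin n := ⟨(π x : ℕ) - 1, lt_trans (by omega) (π x).isLt⟩ with hv
    have hvlt : v < π x := by simp [Fin.lt_def, hv]; omega
    have hmin : ∀ a ∈ I j, π x ≤ π a := by
      intro a ha
      rcases lt_or_eq_of_le (hmax a ha) with h1 | h1
      · exact le_of_lt (hdec a ha x hxj h1)
      · exact le_of_eq (by rw [h1])
    set z : Fin n := π.symm v with hz
    have hpz : π z = v := π.apply_symm_apply v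
    have hzx : z ≠ x := by
      intro hzx; rw [hzx] at hpz; exact absurd hpz.symm (ne_of_lt hvlt)
    rcases lt_or_gt_of_ne hzx with hzlt | hxz
    · -- z < x : 231 pattern z x y
      have hyv : π y ≤ v := by
        have := hyx
        simp only [Fin.lt_def] at this
        simp [Fin.le_def, hv]; omega
      have hyz : π y < π z := by
        rw [hpz]
        rcases lt_or_eq_of_le hyv with h1 | h1
        · exact h1
        · exfalso
          have hyz' : y = z := π.injective (by rw [hpz, h1])
          exact absurd hyz' (ne_of_gt (lt_trans hzlt hxy))
      exact h ⟨z, x, y, hzlt, hxy, hyz, hpz ▸ hvlt⟩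
    · -- x < z : extend the run
      have hzI : z ∉ I j := by
        intro hzI
        exact absurd (hmax z hzI) (not_le_of_gt hxz)
      have hJdec : IsDecSeq π (insert z (I j)) := by
        refine ⟨⟨z, Finset.mem_insert_self _ _⟩, ?_, ?_⟩
        · intro a ha b hb hab
          rcases Finset.mem_insert.1 ha with ha' | ha' <;>
            rcases Finset.mem_insert.1 hb with hb' | hb'
          · exact absurd (ha' ▸ hb' ▸ hab) (lt_irrefl _)
          · exfalso
            exact absurd hab (not_lt_of_ge (le_of_lt (lt_of_le_of_lt (hmax b hb') (ha' ▸ hxz))))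
          · rw [hb', hpz]
            exact lt_of_lt_of_le hvlt (hmin a ha')
          · exact hdec a ha' b hb' hab
        · intro w ⟨a, ha, haw⟩ ⟨b, hb, hbw⟩
          by_cases hwv : w = v
          · exact ⟨z, Finset.mem_insert_self _ _, hpz.trans hwv.symm⟩
          rcases lt_or_gt_of_ne hwv with hw1 | hw1
          · exfalso
            rcases Finset.mem_insert.1 ha with ha' | ha'
            · rw [ha', hpz] at haw
              exact absurd (lt_of_le_of_lt haw hw1) (lt_irrefl _)
            · exact absurd (lt_of_le_of_lt haw (lt_trans hw1 hvlt))
                (not_lt_of_ge (hmin a ha'))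
          · have hwx : π x ≤ w := by
              have hw1' : (v : ℕ) < (w : ℕ) := hw1
              rw [Fin.le_def]
              simp only [hv] at hw1'
              omega
            have hb' : b ∈ I j := by
              rcases Finset.mem_insert.1 hb with hb' | hb'
              · exfalso
                rw [hb', hpz] at hbw
                exact absurd (lt_of_le_of_lt hbw hvlt) (not_lt_of_ge hwx)
              · exact hb'
            obtain ⟨c, hc, hcw⟩ := hintv w ⟨x, hxj, hwx⟩ ⟨b, hb', hbw⟩
            exact ⟨c, Finset.mem_insert_of_mem hc, hcw⟩
      have := hmaxl _ hJdec (Finset.subset_insert _ _)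
      exact hzI (this ▸ Finset.mem_insert_self z (I j))
  · intro hrmin
    obtain ⟨j, hxj, -⟩ := hpart x
    refine ⟨j, hxj, fun y hy => ?_⟩
    by_contra hxy
    push_neg at hxy
    obtain ⟨⟨-, hdec, -⟩, -⟩ := hIDR j
    exact absurd (hdec x hxj y hy hxy) (not_lt_of_gt (hrmin y hxy))

end
end ThesisStmt
end

section
/- Let π be a 231-avoiding permutation with inverse descent runs I₁,...,I_k ordered by decreasing maximum value. If u < v, then every value of π on I_u exceeds every value of π on I_v, i.e., min(π(I_u)) > max(π(I_v)). -/
open scoped Classical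

namespace ThesisStmt
noncomputable section

variable {n : ℕ}

/-- for 231-avoiding π with ordered inverse descent runs, if u < v
then every value of π on I_u exceeds every value of π on I_v. -/
theorem stmt18 {n k : ℕ} (π : Equiv.Perm (Fin n)) (h : Avoids231 π)
    (I : Fin k → Finset (Fin n)) (hI : IDRFamily π I) :
    ∀ u v : Fin k, u < v → ∀ a ∈ I u, ∀ b ∈ I v, π b < π a := by
  obtain ⟨hidr, huniq, hdom⟩ := hI
  intro u v huv a ha b hb
  by_contra hab
  push_neg at hab
  -- witness a₀ ∈ I u dominating all of I v
  obtain ⟨a₀, ha₀, hdom₀⟩ := hdom u v huv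
  have hba₀ : π b < π a₀ := hdom₀ b hb
  -- interval property of I u gives c ∈ I u with π c = π b
  obtain ⟨hne, hdec, hint⟩ := (hidr u).1
  obtain ⟨c, hc, hcb⟩ := hint (π b) ⟨a, ha, hab⟩ ⟨a₀, ha₀, le_of_lt hba₀⟩
  have : c = b := π.injective hcb
  subst this
  obtain ⟨j, _, hj⟩ := huniq c
  have h1 : u = j := hj u hc
  have h2 : v = j := hj v hb
  exact absurd (h1.trans h2.symm) (ne_of_lt huv)

end
end ThesisStmt
end
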